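/- arXiv:1109.3915 — 6 statements merged into one kernel-verified Lean document; each statement's English description precedes it below -/
import Mathlib

section
/- There exists a universal constant C such that for every n ≥ 2, the mixing time of the random transposition walk on the symmetric group S_n satisfies τ_mix ≤ C · n · log n, where τ_mix = min{t : max_{σ ∈ S_n} ‖P̄^t(σ,·) − π̄‖_TV ≤ 1/4}. -/
noncomputable section
open scoped BigOperators Classical

/-- Total variation distance between two functions (distributions) on a finite set. -/
def tvDist {Ω : Type*} [Fintype Ω] (μ ν : Ω → ℝ) : ℝ := (∑ x, |μ x - ν x|) / 2

/-- Transition matrix of the random transposition walk on `S_n`. -/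
def rtMatrix (n : ℕ) : Matrix (Equiv.Perm (Fin n)) (Equiv.Perm (Fin n)) ℝ :=
  fun σ α =>
    ((Finset.univ.filter (fun ij : Fin n × Fin n => σ * Equiv.swap ij.1 ij.2 = α)).card : ℝ)
      / (n : ℝ) ^ 2

/-- Uniform (stationary) distribution on `S_n`. -/
def rtPi (n : ℕ) : Equiv.Perm (Fin n) → ℝ := fun _ => ((n.factorial : ℝ))⁻¹

/-- Cycle type of a permutation, as a partition of `n`. -/
def cyc (n : ℕ) (α : Equiv.Perm (Fin n)) : Nat.Partition n :=
  cast (congrArg Nat.Partition (Fintype.card_fin n)) α.partition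

/-- Transition probabilities of the split-merge chain on partitions of `n`. -/
def smKernel (n : ℕ) (p q : Nat.Partition n) : ℝ :=
  (if q = p then (1 : ℝ) / n else 0)
  + (p.parts.map (fun a =>
      ∑ r ∈ Finset.Ico 1 a,
        if q.parts = r ::ₘ (a - r) ::ₘ p.parts.erase a then (a : ℝ) / (n : ℝ) ^ 2 else 0)).sum
  + (p.parts.map (fun a =>
      ((p.parts.erase a).map (fun b =>
        if q.parts = (a + b) ::ₘ ((p.parts.erase a).erase b) then
          (a : ℝ) * (b : ℝ) / (n : ℝ) ^ 2 else 0)).sum)).sum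

/-- Transition matrix of the split-merge chain. -/
def smMatrix (n : ℕ) : Matrix (Nat.Partition n) (Nat.Partition n) ℝ := fun p q => smKernel n p q

/-- Stationary distribution of the split-merge chain: `π(σ) = |Perm(σ)|/n!`. -/
def smPi (n : ℕ) : Nat.Partition n → ℝ := fun σ =>
  ((Finset.univ.filter (fun α : Equiv.Perm (Fin n) => cyc n α = σ)).card : ℝ) / (n.factorial : ℝ)

/-- `p` is obtained from `q` by splitting one part into two. -/
def IsSplitOf (n : ℕ) (p q : Nat.Partition n) : Prop :=
  ∃ a ∈ q.parts, ∃ r : ℕ, 1 ≤ r ∧ r < a ∧ p.parts = r ::ₘ (a - r) ::ₘ q.parts.erase a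

/-- Adjacency graph of single split/merge moves on partitions of `n`. -/
def smGraph (n : ℕ) : SimpleGraph (Nat.Partition n) where
  Adj p q := p ≠ q ∧ (IsSplitOf n p q ∨ IsSplitOf n q p)
  symm := ⟨fun p q h => ⟨h.1.symm, h.2.symm⟩⟩
  loopless := ⟨fun p h => h.1 rfl⟩

/-- The split-merge graph distance `ρ` on partitions of `n`. -/
def rho (n : ℕ) (p q : Nat.Partition n) : ℕ := (smGraph n).dist p q

/-- The multiset of parts on which two partitions differ. -/
def diffParts {n : ℕ} (σ τ : Nat.Partition n) : Multiset ℕ :=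
  (σ.parts - τ.parts) + (τ.parts - σ.parts)

/-- `s(σ,τ)`: the smallest part in which adjacent `σ` and `τ` differ; `s(σ,σ) = n/2`. -/
def sPart (n : ℕ) (σ τ : Nat.Partition n) : ℝ :=
  if σ = τ then (n : ℝ) / 2 else ((((diffParts σ τ).sort (· ≤ ·)).headI : ℕ) : ℝ)

/-- `m(σ,τ)`: the medium part in which adjacent `σ` and `τ` differ; `m(σ,σ) = n`. -/
def mPart (n : ℕ) (σ τ : Nat.Partition n) : ℝ :=
  if σ = τ then (n : ℝ) else (((((diffParts σ τ).sort (· ≤ ·)).tail).headI : ℕ) : ℝ)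

/-- `|V(σ,x)|`: the sum of the parts of `σ` of size at least `x`. -/
def Vsum {n : ℕ} (σ : Nat.Partition n) (x : ℝ) : ℝ :=
  (((Multiset.filter (fun a : ℕ => x ≤ (a : ℝ)) σ.parts).sum : ℕ) : ℝ)

/-- A coupling of two split-merge chains started at `(σ, τ)`, given by the probabilities
`P t h` of each finite trajectory `h` of states at times `0, …, t`. -/
def IsSMCoupling (n : ℕ) (σ τ : Nat.Partition n)
    (P : (t : ℕ) → (Fin (t + 1) → Nat.Partition n × Nat.Partition n) → ℝ) : Prop :=
  (∀ t h, 0 ≤ P t h) ∧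
  (P 0 (fun _ => (σ, τ)) = 1) ∧
  (∀ (t : ℕ) (h : Fin (t + 1) → Nat.Partition n × Nat.Partition n),
      P t h = ∑ z : Nat.Partition n × Nat.Partition n, P (t + 1) (Fin.snoc h z)) ∧
  (∀ (t : ℕ) (h : Fin (t + 1) → Nat.Partition n × Nat.Partition n) (a : Nat.Partition n),
      ∑ b : Nat.Partition n, P (t + 1) (Fin.snoc h (a, b))
        = smKernel n (h (Fin.last t)).1 a * P t h) ∧
  (∀ (t : ℕ) (h : Fin (t + 1) → Nat.Partition n × Nat.Partition n) (b : Nat.Partition n),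
      ∑ a : Nat.Partition n, P (t + 1) (Fin.snoc h (a, b))
        = smKernel n (h (Fin.last t)).2 b * P t h)

/-- The coupling is coalescent: once the two coordinates meet they stay together. -/
def IsCoalescent (n : ℕ)
    (P : (t : ℕ) → (Fin (t + 1) → Nat.Partition n × Nat.Partition n) → ℝ) : Prop :=
  ∀ (t : ℕ) (h : Fin (t + 1) → Nat.Partition n × Nat.Partition n), P t h ≠ 0 →
    ∀ i j : Fin (t + 1), i ≤ j → (h i).1 = (h i).2 → (h j).1 = (h j).2

/-- Along the coupling, `ρ(X_t, Y_t) ≤ 1` almost surely. -/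
def StaysClose (n : ℕ)
    (P : (t : ℕ) → (Fin (t + 1) → Nat.Partition n × Nat.Partition n) → ℝ) : Prop :=
  ∀ (t : ℕ) (h : Fin (t + 1) → Nat.Partition n × Nat.Partition n), P t h ≠ 0 →
    ∀ i : Fin (t + 1), rho n (h i).1 (h i).2 ≤ 1

/-- On the event `X_t ≠ Y_t`, the conditional probability of meeting at time `t+1`
is at least `4 s(X_t,Y_t)/n²`. -/
def MeetLowerBound (n : ℕ)
    (P : (t : ℕ) → (Fin (t + 1) → Nat.Partition n × Nat.Partition n) → ℝ) : Prop :=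
  ∀ (t : ℕ) (h : Fin (t + 1) → Nat.Partition n × Nat.Partition n),
    (h (Fin.last t)).1 ≠ (h (Fin.last t)).2 →
      4 * sPart n (h (Fin.last t)).1 (h (Fin.last t)).2 / (n : ℝ) ^ 2 * P t h ≤
        ∑ z : Nat.Partition n, P (t + 1) (Fin.snoc h (z, z))

/-- Probability that the pair of chains at time `t` satisfies `E`. -/
def probAt (n : ℕ)
    (P : (t : ℕ) → (Fin (t + 1) → Nat.Partition n × Nat.Partition n) → ℝ) (t : ℕ)
    (E : Nat.Partition n × Nat.Partition n → Prop) : ℝ :=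
  ∑ h : Fin (t + 1) → Nat.Partition n × Nat.Partition n,
    if E (h (Fin.last t)) then P t h else 0

/-- Expectation of `g(X_t, Y_t)`. -/
def expAt (n : ℕ)
    (P : (t : ℕ) → (Fin (t + 1) → Nat.Partition n × Nat.Partition n) → ℝ) (t : ℕ)
    (g : Nat.Partition n × Nat.Partition n → ℝ) : ℝ :=
  ∑ h : Fin (t + 1) → Nat.Partition n × Nat.Partition n, P t h * g (h (Fin.last t))

/-- A coupling of one step of the split-merge chain from `σ` and from `τ`. -/
def IsOneStepCoupling (n : ℕ) (σ τ : Nat.Partition n)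
    (μ : Nat.Partition n × Nat.Partition n → ℝ) : Prop :=
  (∀ z, 0 ≤ μ z) ∧ (∀ p, ∑ q, μ (p, q) = smKernel n σ p) ∧
    (∀ q, ∑ p, μ (p, q) = smKernel n τ q)

/-- Length of the cycle of `α` containing `v`. -/
def cycLen {n : ℕ} (α : Equiv.Perm (Fin n)) (v : Fin n) : ℕ :=
  Function.minimalPeriod ⇑α v


/-!
Broder's strong uniform time. Run the walk together with a set of marked cards: when positions
`i` and `j` are transposed, the card at `j` gets marked if it is unmarked and the card at `i` is
marked or `i = j`. By induction on time, given the marked set and the positions of the unmarked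
cards, all arrangements of the marked cards are equally likely. Hence the law at time `t`
dominates `(1 - q_t)` times the uniform law, where `q_t` is the probability that some card is
still unmarked, and the distance to uniformity is at most `q_t`. With `k` cards marked a new one
is marked with probability `(k + 1)(n - k)/n²`, so the expected time to mark every card is
`∑ n²/((k + 1)(n - k)) = 2n²/(n + 1) · H_n ≤ 2n(1 + log n)`, and Markov's inequality gives
`q_t ≤ 1/4` for `t ≈ 24 n log n`.
-/

open Finset Matrix

section WalkMatrix

variable {S L : Type*} [Fintype S] [DecidableEq S] [Fintype L]

def walkMatrix (step : S → L → S) : Matrix S S ℝ :=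
  fun s s' => (#{l | step s l = s'} : ℝ) / Fintype.card L

variable (step : S → L → S)

lemma walkMatrix_mulVec (f : S → ℝ) (s : S) :
    (walkMatrix step *ᵥ f) s = (∑ l, f (step s l)) / Fintype.card L := by
  simp only [mulVec, dotProduct, walkMatrix, card_filter, Nat.cast_sum, div_mul_eq_mul_div,
    sum_mul, ← sum_div]
  rw [sum_comm]
  simp

lemma vecMul_walkMatrix (v : S → ℝ) (s' : S) :
    (v ᵥ* walkMatrix step) s' =
      (∑ l, ∑ s, if step s l = s' then v s else 0) / Fintype.card L := by
  simp only [vecMul, dotProduct, walkMatrix, card_filter, Nat.cast_sum, mul_div_assoc',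
    mul_sum, ← sum_div]
  rw [sum_comm]
  simp

lemma walkMatrix_mem_rowStochastic [Nonempty L] : walkMatrix step ∈ rowStochastic ℝ S := by
  refine mem_rowStochastic.2 ⟨fun s s' => by unfold walkMatrix; positivity, funext fun s => ?_⟩
  simp [walkMatrix_mulVec]

lemma walkMatrix_mulVec_le [Nonempty L] {g : S → ℝ} (hg : ∀ s l, g (step s l) ≤ g s) :
    walkMatrix step *ᵥ g ≤ g := fun s => by
  rw [walkMatrix_mulVec, div_le_iff₀ (by positivity)]
  simpa [mul_comm] using sum_le_sum fun l (_ : l ∈ univ) => hg s l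

lemma walkMatrix_pow_mulVec_comp {T : Type*} [Fintype T] [DecidableEq T] (step' : T → L → T)
    (proj : S → T) (hproj : ∀ s l, proj (step s l) = step' (proj s) l) (g : T → ℝ) (t : ℕ) :
    walkMatrix step ^ t *ᵥ (g ∘ proj) = (walkMatrix step' ^ t *ᵥ g) ∘ proj := by
  induction t with
  | zero => simp
  | succ t ih =>
    funext s
    simp only [pow_succ', ← mulVec_mulVec, ih, Function.comp_apply, walkMatrix_mulVec, hproj]

end WalkMatrix

section Drift

variable {S : Type*} [Fintype S]

lemma mulVec_mono_of_nonneg {P : Matrix S S ℝ} (hP : ∀ i j, 0 ≤ P i j) {v w : S → ℝ}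
    (hvw : v ≤ w) : P *ᵥ v ≤ P *ᵥ w := fun i =>
  sum_le_sum fun j _ => mul_le_mul_of_nonneg_left (hvw j) (hP i j)

/-- Telescoping: `t · E[g(X_t)] ≤ ∑_{k<t} E[g(X_k)] = f(X_0) - E[f(X_t)]`, since `E[g(X_k)]`
decreases in `k`. -/
lemma natCast_mul_pow_mulVec_le_of_drift [DecidableEq S] {P : Matrix S S ℝ}
    (hP : P ∈ rowStochastic ℝ S) {f g : S → ℝ} (hf : 0 ≤ f) (hdrift : P *ᵥ f = f - g)
    (hg : P *ᵥ g ≤ g) (t : ℕ) (s : S) :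
    t * (P ^ t *ᵥ g) s ≤ f s := by
  have hnonneg : ∀ k i j, 0 ≤ (P ^ k) i j := fun k i j =>
    nonneg_of_mem_rowStochastic (pow_mem hP k)
  have hstep : ∀ k, P ^ (k + 1) *ᵥ f = P ^ k *ᵥ f - P ^ k *ᵥ g := fun k => by
    rw [pow_succ, ← mulVec_mulVec, hdrift, mulVec_sub]
  have hanti : Antitone fun k => P ^ k *ᵥ g := antitone_nat_of_succ_le fun k => by
    rw [pow_succ, ← mulVec_mulVec]
    exact mulVec_mono_of_nonneg (hnonneg k) hg
  have htelescope : ∑ k ∈ range t, P ^ k *ᵥ g = f - P ^ t *ᵥ f := by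
    simpa only [hstep, sub_sub_cancel, pow_zero, one_mulVec] using
      sum_range_sub' (fun k => P ^ k *ᵥ f) t
  have hle : t • (P ^ t *ᵥ g) ≤ f - P ^ t *ᵥ f := by
    rw [← htelescope]
    simpa using card_nsmul_le_sum (range t) _ _ fun k hk => hanti (mem_range.1 hk).le
  have hrem : 0 ≤ (P ^ t *ᵥ f) s := nonneg_mulVec_of_mem_rowStochastic (pow_mem hP t) hf s
  have := hle s
  simp only [Pi.smul_apply, nsmul_eq_mul, Pi.sub_apply] at this
  linarith

end Drift

lemma tvDist_le_of_le_mul {Ω : Type*} [Fintype Ω] {μ ν : Ω → ℝ} {q : ℝ} (hq : 0 ≤ q)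
    (hν : 0 ≤ ν) (hsum : ∑ x, μ x = ∑ x, ν x) (hlow : ∀ x, (1 - q) * ν x ≤ μ x) :
    tvDist μ ν ≤ q * ∑ x, ν x := by
  have hpt : ∀ x, |μ x - ν x| ≤ (μ x - ν x) + 2 * q * ν x := fun x => by
    rw [abs_le]
    have : 0 ≤ q * ν x := mul_nonneg hq (hν x)
    constructor <;> nlinarith [hlow x]
  have := sum_le_sum fun x (_ : x ∈ univ) => hpt x
  rw [sum_add_distrib, sum_sub_distrib, hsum, sub_self, zero_add, ← mul_sum] at this
  unfold tvDist
  linarith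

lemma Finset.ite_insert_eq_iff {α : Type*} [DecidableEq α] {c d : α} {M M' : Finset α} :
    (if c ∉ M' ∧ d ∈ insert c M' then insert c M' else M') = M ↔
      (M' = M ∧ (c ∈ M ∨ d ∉ insert c M)) ∨ (M' = M.erase c ∧ c ∈ M ∧ d ∈ M) := by
  constructor
  · intro h
    split_ifs at h with hc
    · subst h
      exact Or.inr ⟨(erase_insert hc.1).symm, mem_insert_self _ _, mem_insert.2 (mem_insert.1 hc.2)⟩
    · subst h
      exact Or.inl ⟨rfl, by tauto⟩
  · rintro (⟨rfl, hM⟩ | ⟨rfl, hc, hd⟩)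
    · rw [if_neg]; tauto
    · rw [if_pos ⟨notMem_erase _ _, by rwa [insert_erase hc]⟩, insert_erase hc]

lemma Fintype.sum_ite_eq_or_eq {α β : Type*} [Fintype α] [DecidableEq α] [AddCommMonoid β]
    {a b : α} {p q : Prop} [Decidable p] [Decidable q] (hab : q → b ≠ a) (f : α → β) :
    ∑ x, (if (x = a ∧ p) ∨ (x = b ∧ q) then f x else 0) =
      (if p then f a else 0) + (if q then f b else 0) := by
  rw [← Fintype.sum_ite_eq' a fun x => if p then f x else 0,
    ← Fintype.sum_ite_eq' b fun x => if q then f x else 0, ← sum_add_distrib]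
  refine Finset.sum_congr rfl fun x _ => ?_
  by_cases ha : x = a <;> by_cases hb : x = b <;> by_cases hq : q <;> simp_all

namespace Broder

variable {n : ℕ}

/-- `X` sends positions to cards, `M` is the set of marked cards. -/
abbrev MarkState (n : ℕ) := Equiv.Perm (Fin n) × Finset (Fin n)

-- Broder's rule; the case `l.1 = l.2` is the left-hand card being the right-hand card itself.
def Marks (s : MarkState n) (l : Fin n × Fin n) : Prop :=
  s.1 l.2 ∉ s.2 ∧ s.1 l.1 ∈ insert (s.1 l.2) s.2

def markStep (s : MarkState n) (l : Fin n × Fin n) : MarkState n :=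
  (s.1 * Equiv.swap l.1 l.2, if Marks s l then insert (s.1 l.2) s.2 else s.2)

variable (n) in
def markMatrix : Matrix (MarkState n) (MarkState n) ℝ := walkMatrix (markStep (n := n))

lemma sum_ite_markStep_eq (v : MarkState n → ℝ) (X : Equiv.Perm (Fin n)) (M : Finset (Fin n))
    (l : Fin n × Fin n) :
    ∑ s, (if markStep s l = (X, M) then v s else 0) =
      (if X l.1 ∈ M ∨ X l.2 ∉ insert (X l.1) M then v (X * Equiv.swap l.1 l.2, M) else 0) +
      (if X l.1 ∈ M ∧ X l.2 ∈ M then v (X * Equiv.swap l.1 l.2, M.erase (X l.1)) else 0) := by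
  set Y := X * Equiv.swap l.1 l.2
  have hY1 : Y l.1 = X l.2 := by simp [Y]
  have hY2 : Y l.2 = X l.1 := by simp [Y]
  have hpre : ∀ Z M', markStep (Z, M') l = (X, M) ↔
      Z = Y ∧ ((M' = M ∧ (X l.1 ∈ M ∨ X l.2 ∉ insert (X l.1) M)) ∨
        (M' = M.erase (X l.1) ∧ X l.1 ∈ M ∧ X l.2 ∈ M)) := fun Z M' => by
    have hZ : Z * Equiv.swap l.1 l.2 = X ↔ Z = Y := by
      rw [eq_comm, ← mul_inv_eq_iff_eq_mul, eq_comm, Equiv.swap_inv]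
    simp only [markStep, Marks, Prod.mk.injEq, hZ]
    constructor
    · rintro ⟨rfl, h⟩; exact ⟨rfl, ite_insert_eq_iff.1 (by simpa only [hY1, hY2] using h)⟩
    · rintro ⟨rfl, h⟩; exact ⟨rfl, by simpa only [hY1, hY2] using ite_insert_eq_iff.2 h⟩
  have hne : X l.1 ∈ M ∧ X l.2 ∈ M → M.erase (X l.1) ≠ M := fun h he =>
    notMem_erase _ M (he ▸ h.1)
  simp only [Fintype.sum_prod_type, hpre]
  rw [sum_eq_single Y (fun Z _ hZ => by simp [hZ]) (by simp)]
  simp only [true_and]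
  exact Fintype.sum_ite_eq_or_eq hne _

/-- Broder's invariant: given the marked set and the positions of the unmarked cards, all
arrangements of the marked cards have the same mass. -/
def IsUniformOnMarked (v : MarkState n → ℝ) : Prop :=
  ∀ (M : Finset (Fin n)) (Y Z : Equiv.Perm (Fin n)), (∀ a, Y a ∉ M → Z a = Y a) →
    v (Z, M) = v (Y, M)

section Agree

variable {M : Finset (Fin n)} {Y Z : Equiv.Perm (Fin n)}

lemma mem_iff_of_agree (hYZ : ∀ a, Y a ∉ M → Z a = Y a) (a : Fin n) : Z a ∈ M ↔ Y a ∈ M := by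
  refine ⟨fun hZ => by_contra fun hY => hY (hYZ a hY ▸ hZ), fun hY => by_contra fun hZ => ?_⟩
  have hb : Y (Y⁻¹ (Z a)) ∉ M := by simpa using hZ
  have : Y⁻¹ (Z a) = a := Z.injective (by rw [hYZ _ hb]; simp)
  exact hb (by rwa [this])

/-- `Y * swap i j` marks the card `Y i`; if `Z` holds that card at `i'`, then `Z * swap i' j`
puts it at the same position `j`, and nothing else changes off the marked set. -/
lemma agree_erase_mul_swap (hYZ : ∀ a, Y a ∉ M → Z a = Y a) {i i' j : Fin n} (hi' : Z i' = Y i)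
    (hi : Y i ∈ M) (hj : Y j ∈ M) :
    ∀ a, (Y * Equiv.swap i j) a ∉ M.erase (Y i) →
      (Z * Equiv.swap i' j) a = (Y * Equiv.swap i j) a := by
  intro a ha
  by_cases haj : a = j
  · subst haj; simpa using hi'
  by_cases hai : a = i
  · subst hai
    exact absurd (mem_erase.2 ⟨fun h => haj (Y.injective h).symm, hj⟩) (by simpa using ha)
  have hYa : Y a ∉ M := fun h =>
    by simp [Equiv.swap_apply_of_ne_of_ne hai haj, h, Y.injective.ne hai] at ha
  have hai' : a ≠ i' := fun h => hYa (by rw [← hYZ a hYa, h, hi']; exact hi)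
  simp [Equiv.swap_apply_of_ne_of_ne hai haj, Equiv.swap_apply_of_ne_of_ne hai' haj, hYZ a hYa]

end Agree

lemma IsUniformOnMarked.vecMul_markMatrix {v : MarkState n → ℝ} (hv : IsUniformOnMarked v) :
    IsUniformOnMarked (v ᵥ* markMatrix n) := by
  intro M Y Z hYZ
  have hmem := mem_iff_of_agree hYZ
  simp only [markMatrix, vecMul_walkMatrix, sum_ite_markStep_eq, sum_add_distrib]
  congr 2
  · refine sum_congr rfl fun l _ => ?_
    simp only [mem_insert, Z.injective.eq_iff, Y.injective.eq_iff, hmem]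
    split_ifs
    · exact hv M _ _ fun a => hYZ _
    · rfl
  · -- reindex the left-hand position so that `Z` and `Y` mark the same card
    rw [← Equiv.sum_comp ((Z⁻¹ * Y).prodCongr (Equiv.refl _))]
    refine sum_congr rfl fun l _ => ?_
    have hi' : Z ((Z⁻¹ * Y) l.1) = Y l.1 := by simp
    simp only [Equiv.prodCongr_apply, Prod.map, Equiv.refl_apply, hi', hmem]
    split_ifs with h
    · exact hv _ _ _ (agree_erase_mul_swap hYZ hi' h.1 h.2)
    · rfl

lemma isUniformOnMarked_markMatrix_pow (σ : Equiv.Perm (Fin n)) (t : ℕ) :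
    IsUniformOnMarked ((markMatrix n ^ t) (σ, ∅)) := by
  induction t with
  | zero =>
    intro M Y Z hYZ
    rcases M.eq_empty_or_nonempty with rfl | hM
    · rw [Equiv.ext fun a => hYZ a (notMem_empty _)]
    · simp [one_apply, hM.ne_empty.symm]
  | succ t ih => exact ih.vecMul_markMatrix

lemma card_marks (s : MarkState n) : #{l | Marks s l} = (#s.2 + 1) * (n - #s.2) := by
  obtain ⟨X, M⟩ := s
  have hcards : #{l | Marks (X, M) l} = #{p : Fin n × Fin n | p.2 ∉ M ∧ p.1 ∈ insert p.2 M} :=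
    card_equiv (X.prodCongr X) fun l => by simp [Marks]
  rw [hcards, card_filter, Fintype.sum_prod_type_right]
  have hrow : ∀ b : Fin n, (∑ a, if b ∉ M ∧ a ∈ insert b M then 1 else 0) =
      if b ∈ Mᶜ then #M + 1 else 0 := fun b => by
    by_cases hb : b ∈ M
    · simp [hb]
    · rw [if_pos (mem_compl.2 hb), ← card_insert_of_notMem hb]
      simp only [hb, not_false_eq_true, true_and, sum_boole, filter_mem_eq_inter, univ_inter,
        Nat.cast_id]
  rw [sum_congr rfl fun b _ => hrow b, sum_ite_mem, univ_inter, sum_const, card_compl,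
    Fintype.card_fin, smul_eq_mul, mul_comm]

lemma card_markStep (s : MarkState n) (l : Fin n × Fin n) :
    #(markStep s l).2 = if Marks s l then #s.2 + 1 else #s.2 := by
  unfold markStep
  split_ifs with h
  · exact card_insert_of_notMem h.1
  · rfl

variable (n) in
/-- With `j` cards marked, a step marks a new card with probability `(j + 1) (n - j) / n²`, so
this is the expected number of steps until all cards are marked, starting from `k` marked. -/
def expectedMarkingTime (k : ℕ) : ℝ := ∑ j ∈ Ico k n, (n : ℝ) ^ 2 / ((j + 1) * (n - j))

lemma expectedMarkingTime_eq_add {k : ℕ} (hk : k < n) :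
    expectedMarkingTime n k = n ^ 2 / ((k + 1) * (n - k)) + expectedMarkingTime n (k + 1) :=
  sum_eq_sum_Ico_succ_bot hk _

def notAllMarked (s : MarkState n) : ℝ := if s.2 = univ then 0 else 1

lemma markMatrix_mulVec_expectedMarkingTime [NeZero n] :
    markMatrix n *ᵥ (fun s => expectedMarkingTime n #s.2) =
      (fun s => expectedMarkingTime n #s.2) - notAllMarked := by
  funext s
  have hL : (Fintype.card (Fin n × Fin n) : ℝ) = n ^ 2 := by simp [sq]
  have hsum : ∑ l, expectedMarkingTime n #(markStep s l).2 =
      n ^ 2 * expectedMarkingTime n #s.2 + #{l | Marks s l} *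
        (expectedMarkingTime n (#s.2 + 1) - expectedMarkingTime n #s.2) := by
    have hterm : ∀ l, expectedMarkingTime n #(markStep s l).2 = expectedMarkingTime n #s.2 +
        if Marks s l then expectedMarkingTime n (#s.2 + 1) - expectedMarkingTime n #s.2 else 0 :=
      fun l => by rw [card_markStep]; split_ifs <;> ring
    rw [sum_congr rfl fun l _ => hterm l, sum_add_distrib, sum_const, ← sum_filter, sum_const,
      card_univ, nsmul_eq_mul, nsmul_eq_mul, hL]
  rw [markMatrix, walkMatrix_mulVec, hL, hsum, card_marks]
  have hn : (n : ℝ) ≠ 0 := NeZero.ne _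
  simp only [Pi.sub_apply, notAllMarked]
  split_ifs with hM
  · simp only [hM, card_univ, Fintype.card_fin, Nat.sub_self, mul_zero, Nat.cast_zero,
      zero_mul, add_zero, sub_zero]
    field_simp
  · have hlt : #s.2 < n := by simpa using (card_lt_iff_ne_univ s.2).2 hM
    have hsub : (n : ℝ) - #s.2 ≠ 0 := sub_ne_zero.2 (by exact_mod_cast hlt.ne')
    rw [expectedMarkingTime_eq_add hlt]
    push_cast [Nat.cast_sub hlt.le]
    field_simp
    ring

lemma markMatrix_mem_rowStochastic [NeZero n] : markMatrix n ∈ rowStochastic ℝ (MarkState n) :=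
  walkMatrix_mem_rowStochastic _

lemma markMatrix_mulVec_notAllMarked_le [NeZero n] :
    markMatrix n *ᵥ notAllMarked ≤ notAllMarked :=
  walkMatrix_mulVec_le _ fun s l => by
    unfold notAllMarked
    by_cases h : s.2 = univ
    · simp [markStep, h]
    · split_ifs <;> norm_num

lemma natCast_mul_probability_notAllMarked_le [NeZero n] (σ : Equiv.Perm (Fin n)) (t : ℕ) :
    t * (markMatrix n ^ t *ᵥ notAllMarked) (σ, ∅) ≤ expectedMarkingTime n 0 := by
  have hnonneg : ∀ k, 0 ≤ expectedMarkingTime n k := fun k => sum_nonneg fun j hj => by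
    have : (j : ℝ) < n := by exact_mod_cast (mem_Ico.1 hj).2
    have : (0 : ℝ) < (j + 1) * (n - j) := by nlinarith
    positivity
  simpa only [card_empty] using natCast_mul_pow_mulVec_le_of_drift markMatrix_mem_rowStochastic
    (fun s => hnonneg _) markMatrix_mulVec_expectedMarkingTime
    markMatrix_mulVec_notAllMarked_le t (σ, ∅)

lemma expectedMarkingTime_zero_eq :
    expectedMarkingTime n 0 = n ^ 2 / (n + 1) * (2 * harmonic n) := by
  have hpf : ∀ j ∈ range n, (n : ℝ) ^ 2 / ((j + 1) * (n - j)) =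
      n ^ 2 / (n + 1) * (((j : ℝ) + 1)⁻¹ + ((n - 1 - j : ℕ) + 1 : ℝ)⁻¹) := fun j hj => by
    have hj : j < n := mem_range.1 hj
    have hreflect : ((n - 1 - j : ℕ) + 1 : ℝ) = n - j := by
      rw [Nat.cast_sub (by omega), Nat.cast_sub (by omega)]; ring
    have : (n : ℝ) - j ≠ 0 := sub_ne_zero.2 (by exact_mod_cast hj.ne')
    rw [hreflect]
    field_simp
    ring
  rw [expectedMarkingTime, ← range_eq_Ico, sum_congr rfl hpf, ← mul_sum, sum_add_distrib,
    sum_range_reflect (fun j => ((j : ℝ) + 1)⁻¹) n]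
  push_cast [harmonic]
  ring

lemma expectedMarkingTime_zero_le : expectedMarkingTime n 0 ≤ 2 * n * (1 + Real.log n) := by
  rw [expectedMarkingTime_zero_eq]
  have hH := harmonic_le_one_add_log n
  have hH0 : (0 : ℝ) ≤ harmonic n := by unfold harmonic; positivity
  have hn : (n : ℝ) ^ 2 / (n + 1) ≤ n := by
    rw [div_le_iff₀ (by positivity)]; nlinarith
  calc (n : ℝ) ^ 2 / (n + 1) * (2 * harmonic n) ≤ n * (2 * harmonic n) := by gcongr
    _ ≤ n * (2 * (1 + Real.log n)) := by gcongr
    _ = 2 * n * (1 + Real.log n) := by ring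

end Broder

open Broder

lemma rtMatrix_eq_walkMatrix (n : ℕ) :
    rtMatrix n =
      walkMatrix fun (X : Equiv.Perm (Fin n)) (l : Fin n × Fin n) => X * Equiv.swap l.1 l.2 := by
  ext σ α
  simp [rtMatrix, walkMatrix, sq]

lemma rtMatrix_pow_apply {n : ℕ} (t : ℕ) (σ α : Equiv.Perm (Fin n)) :
    (rtMatrix n ^ t) σ α = ∑ M, (markMatrix n ^ t) (σ, ∅) (α, M) := by
  have := congrFun (walkMatrix_pow_mulVec_comp markStep
    (fun X (l : Fin n × Fin n) => X * Equiv.swap l.1 l.2) Prod.fst (fun _ _ => rfl)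
    (Pi.single α 1) t) (σ, ∅)
  rw [mulVec_single_one, Function.comp_apply, col_apply, ← rtMatrix_eq_walkMatrix] at this
  rw [← this]
  simp [markMatrix, mulVec, dotProduct, Fintype.sum_prod_type_right, Pi.single_apply]

lemma sum_rtPi (n : ℕ) : ∑ α, rtPi n α = 1 := by
  simp [rtPi, Fintype.card_perm, Nat.factorial_ne_zero]

lemma le_rtMatrix_pow_apply {n : ℕ} [NeZero n] (t : ℕ) (σ α : Equiv.Perm (Fin n)) :
    (1 - (markMatrix n ^ t *ᵥ notAllMarked) (σ, ∅)) * rtPi n α ≤ (rtMatrix n ^ t) σ α := by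
  have hstoch := pow_mem (markMatrix_mem_rowStochastic (n := n)) t
  set ν := (markMatrix n ^ t) (σ, ∅)
  have hunif : ∀ X, ν (X, univ) = ν (α, univ) := fun X =>
    isUniformOnMarked_markMatrix_pow σ t univ α X fun a h => absurd (mem_univ _) h
  have htotal : ∑ X, ν (X, univ) = 1 - (markMatrix n ^ t *ᵥ notAllMarked) (σ, ∅) := by
    rw [← sum_row_of_mem_rowStochastic hstoch (σ, ∅)]
    simp only [mulVec, dotProduct, notAllMarked, ← sum_sub_distrib, Fintype.sum_prod_type]
    refine sum_congr rfl fun X _ => ?_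
    rw [← Fintype.sum_ite_eq' univ fun M => ν (X, M)]
    refine sum_congr rfl fun M _ => ?_
    split_ifs <;> simp [ν]
  rw [rtMatrix_pow_apply]
  calc (1 - (markMatrix n ^ t *ᵥ notAllMarked) (σ, ∅)) * rtPi n α = ν (α, univ) := by
        rw [← htotal, sum_congr rfl fun X _ => hunif X, sum_const, card_univ, Fintype.card_perm,
          Fintype.card_fin, rtPi, nsmul_eq_mul]
        field_simp
    _ ≤ ∑ M, ν (α, M) :=
        single_le_sum (f := fun M => ν (α, M)) (fun M _ => nonneg_of_mem_rowStochastic hstoch)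
          (mem_univ _)

lemma rtMatrix_mem_rowStochastic (n : ℕ) [NeZero n] :
    rtMatrix n ∈ rowStochastic ℝ (Equiv.Perm (Fin n)) :=
  rtMatrix_eq_walkMatrix n ▸ walkMatrix_mem_rowStochastic _

lemma tvDist_rtMatrix_pow_le {n : ℕ} [NeZero n] (t : ℕ) (σ : Equiv.Perm (Fin n)) :
    tvDist ((rtMatrix n ^ t) σ) (rtPi n) ≤ (markMatrix n ^ t *ᵥ notAllMarked) (σ, ∅) := by
  have hq := nonneg_mulVec_of_mem_rowStochastic (x := notAllMarked)
    (pow_mem markMatrix_mem_rowStochastic t)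
    (fun s => by unfold notAllMarked; split_ifs <;> norm_num) (σ, ∅)
  have hsum : ∑ α, (rtMatrix n ^ t) σ α = ∑ α, rtPi n α := by
    rw [sum_row_of_mem_rowStochastic (pow_mem (rtMatrix_mem_rowStochastic n) t), sum_rtPi]
  simpa [sum_rtPi] using tvDist_le_of_le_mul hq (fun _ => by unfold rtPi; positivity) hsum
    (le_rtMatrix_pow_apply t σ)

lemma natCast_mul_tvDist_rtMatrix_pow_le {n : ℕ} [NeZero n] (t : ℕ) (σ : Equiv.Perm (Fin n)) :
    t * tvDist ((rtMatrix n ^ t) σ) (rtPi n) ≤ 2 * n * (1 + Real.log n) :=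
  (mul_le_mul_of_nonneg_left (tvDist_rtMatrix_pow_le t σ) t.cast_nonneg).trans
    ((natCast_mul_probability_notAllMarked_le σ t).trans expectedMarkingTime_zero_le)

/-- There is a universal constant `C` such that for all `n ≥ 2` the mixing time of the
random transposition walk on `S_n` is at most `C n log n`. -/
theorem random_transposition_mixing_time :
    ∃ C : ℝ, ∀ n : ℕ, 2 ≤ n →
      ((sInf {t : ℕ | ∀ σ : Equiv.Perm (Fin n),
          tvDist ((rtMatrix n ^ t) σ) (rtPi n) ≤ 1 / 4} : ℕ) : ℝ) ≤ C * n * Real.log n := by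
  refine ⟨25, fun n hn => ?_⟩
  have : NeZero n := ⟨by omega⟩
  have hn' : (2 : ℝ) ≤ n := by exact_mod_cast hn
  have hlog : 1 / 2 ≤ Real.log n :=
    (show (1 : ℝ) / 2 ≤ Real.log 2 by linarith [Real.log_two_gt_d9]).trans
      (Real.log_le_log (by norm_num) hn')
  set t := ⌈24 * (n * Real.log n)⌉₊
  have ht : 24 * (n * Real.log n) ≤ t := Nat.le_ceil _
  have hmix : ∀ σ : Equiv.Perm (Fin n), tvDist ((rtMatrix n ^ t) σ) (rtPi n) ≤ 1 / 4 :=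
    fun σ => by
      have hbound : 2 * n * (1 + Real.log n) ≤ t * (1 / 4) := by nlinarith
      exact le_of_mul_le_mul_left ((natCast_mul_tvDist_rtMatrix_pow_le t σ).trans hbound)
        (by nlinarith)
  calc _ ≤ (t : ℝ) := by norm_cast; exact Nat.sInf_le hmix
    _ ≤ 24 * (n * Real.log n) + 1 := (Nat.ceil_lt_add_one (by positivity)).le
    _ ≤ 25 * n * Real.log n := by nlinarith


end
end

section
/- For every n ≥ 1 and every t ≥ 0, max_{α ∈ S_n} ‖P̄^t(α,·) − π̄‖_TV ≤ max_{σ ∈ 𝒫_n} ‖P^t(σ,·) − π‖_TV; that is, the distance to stationarity of the random transposition walk is bounded by the distance to stationarity of the split-merge chain. -/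
/-!
Left translations preserve the random transposition walk, so its distance to stationarity does
not depend on the starting permutation and we may start at the identity. From there the law at
time `t` is invariant under conjugation, hence constant on cycle types, as is the uniform
distribution; so its total variation distance to uniform equals that of the pushforwards to
cycle types. Multiplying `σ` by the transposition `(i j)` splits the cycle of `i` into cycles of
lengths `r` and `a - r` when `j = σ ^ r i` lies on it (`a` the length of that cycle), and merges
the cycles of `i` and `j` otherwise. Counting the pairs `(i, j)` producing each cycle type gives
exactly the split-merge kernel, so the pushforward of the walk started at the identity is the
split-merge chain started at its cycle type, whose distance is at most the maximum over all
starting partitions.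
-/

noncomputable section
open scoped BigOperators Classical

open Function Finset
open Multiset (count replicate)

theorem Finset.map_val_eq_add_sdiff {α β : Type*} [DecidableEq α] {s t : Finset α} (h : t ⊆ s)
    (f : α → β) : s.val.map f = t.val.map f + (s \ t).val.map f := by
  rw [sdiff_val, ← Multiset.map_add, add_tsub_cancel_of_le (val_le_iff.2 h)]

theorem Finset.map_val_union_of_disjoint {α β : Type*} [DecidableEq α] {s t : Finset α}
    (h : Disjoint s t) (f : α → β) : (s ∪ t).val.map f = s.val.map f + t.val.map f := by
  rw [← disjUnion_eq_union s t h, disjUnion_val, Multiset.map_add]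

theorem Finset.sum_abs_of_forall_eq {ι : Type*} {s : Finset ι} {g : ι → ℝ}
    (h : ∀ x ∈ s, ∀ y ∈ s, g x = g y) : ∑ x ∈ s, |g x| = |∑ x ∈ s, g x| := by
  rcases s.eq_empty_or_nonempty with rfl | ⟨x₀, hx₀⟩
  · simp
  · rw [Finset.sum_congr rfl fun x hx => congrArg abs (h x hx x₀ hx₀),
      Finset.sum_congr rfl fun x hx => h x hx x₀ hx₀, Finset.sum_const, Finset.sum_const,
      nsmul_eq_mul, nsmul_eq_mul, abs_mul, Nat.abs_cast]

theorem Nat.Partition.zero_notMem_parts {n : ℕ} (p : n.Partition) : 0 ∉ p.parts :=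
  fun h => (p.parts_pos h).false

theorem Nat.Partition.parts_cast {m k : ℕ} (h : m = k) (p : m.Partition) :
    (cast (congrArg Nat.Partition h) p).parts = p.parts := by
  subst h
  rfl

namespace Multiset

def expandParts (P : Multiset ℕ) : Multiset ℕ := P.bind fun a => replicate a a

variable {P Q S : Multiset ℕ} {a : ℕ}

@[simp]
theorem expandParts_cons : expandParts (a ::ₘ P) = replicate a a + expandParts P :=
  cons_bind _ _ _

theorem count_expandParts (P : Multiset ℕ) (k : ℕ) :
    count k (expandParts P) = k * count k P := by
  induction P using Multiset.induction with
  | empty => simp [expandParts]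
  | cons b P ih =>
    rw [expandParts_cons, count_add, ih, count_cons, count_replicate]
    by_cases h : k = b
    · subst h
      simp only [↓reduceIte]
      ring
    · simp [h, Ne.symm h]

theorem sum_map_expandParts {M : Type*} [AddCommMonoid M] (P : Multiset ℕ) (g : ℕ → M) :
    ((expandParts P).map g).sum = (P.map fun a => a • g a).sum := by
  simp [expandParts, map_bind, sum_bind, map_replicate, sum_replicate]

theorem eq_of_expandParts_eq (hP : 0 ∉ P) (hQ : 0 ∉ Q) (h : expandParts P = expandParts Q) :
    P = Q := by
  ext k
  rcases Nat.eq_zero_or_pos k with rfl | hk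
  · rw [count_eq_zero.2 hP, count_eq_zero.2 hQ]
  · simpa [count_expandParts, hk.ne'] using congrArg (count k) h

theorem expandParts_erase_of_eq (ha : 0 < a) (h : expandParts P = replicate a a + S) :
    expandParts (P.erase a) = S := by
  have hmem : a ∈ P := by
    have := congrArg (count a) h
    rw [count_expandParts, count_add, count_replicate_self] at this
    exact count_pos.1 (Nat.pos_of_mul_pos_left (this ▸ Nat.le_add_right a _ |>.trans_lt' ha))
  refine add_left_cancel (a := replicate a a) ?_
  rw [← expandParts_cons, cons_erase hmem, h]

end Multiset

namespace Equiv.Perm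

variable {α : Type*}

section MinimalPeriod

variable (σ : Perm α) {x y : α}

theorem pow_apply_pow_apply (m k : ℕ) (x : α) : (σ ^ m) ((σ ^ k) x) = (σ ^ (m + k)) x := by
  rw [pow_add, mul_apply]

theorem pow_apply_eq_self_iff_minimalPeriod_dvd {m : ℕ} :
    (σ ^ m) x = x ↔ minimalPeriod σ x ∣ m :=
  MulAction.pow_smul_eq_iff_minimalPeriod_dvd (a := σ) (b := x)

theorem pow_minimalPeriod_apply : (σ ^ minimalPeriod σ x) x = x :=
  (pow_apply_eq_self_iff_minimalPeriod_dvd σ).2 dvd_rfl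

theorem pow_mod_minimalPeriod_apply (k : ℕ) :
    (σ ^ (k % minimalPeriod σ x)) x = (σ ^ k) x :=
  MulAction.pow_smul_mod_minimalPeriod σ x k

theorem minimalPeriod_pos [Finite α] (x : α) : 0 < minimalPeriod σ x :=
  Nat.pos_of_ne_zero (NeZero.ne (minimalPeriod (σ • ·) x))

theorem eq_of_pow_apply_eq_of_lt_minimalPeriod {k l : ℕ} (hk : k < minimalPeriod σ x)
    (hl : l < minimalPeriod σ x) (h : (σ ^ k) x = (σ ^ l) x) : k = l := by
  rwa [← iterate_eq_pow, ← iterate_eq_pow,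
    iterate_eq_iterate_iff_of_lt_minimalPeriod hk hl] at h

theorem pow_apply_ne_self {m : ℕ} (h0 : 0 < m) (hm : m < minimalPeriod σ x) : (σ ^ m) x ≠ x :=
  fun h => (Nat.le_of_dvd h0 ((pow_apply_eq_self_iff_minimalPeriod_dvd σ).1 h)).not_gt hm

theorem minimalPeriod_eq_of_pow_apply {L : ℕ} (hL : 0 < L) (hper : (σ ^ L) x = x)
    (hmin : ∀ s, 0 < s → s < L → (σ ^ s) x ≠ x) : minimalPeriod σ x = L := by
  have hdvd := (pow_apply_eq_self_iff_minimalPeriod_dvd σ).1 hper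
  by_contra hne
  exact hmin _ (Nat.pos_of_dvd_of_pos hdvd hL) (lt_of_le_of_ne (Nat.le_of_dvd hL hdvd) hne)
    (pow_minimalPeriod_apply σ)

theorem minimalPeriod_congr {τ : Perm α} (h : ∀ k : ℕ, (τ ^ k) x = (σ ^ k) x) :
    minimalPeriod τ x = minimalPeriod σ x :=
  minimalPeriod_eq_minimalPeriod_iff.2 fun m => by
    simp only [IsPeriodicPt, IsFixedPt, iterate_eq_pow, h]

theorem SameCycle.minimalPeriod_eq [Finite α] {σ : Perm α} (h : σ.SameCycle x y) :
    minimalPeriod σ y = minimalPeriod σ x := by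
  obtain ⟨k, -, rfl⟩ := h.exists_pow_eq'
  rw [← iterate_eq_pow]
  exact minimalPeriod_apply_iterate
    (minimalPeriod_pos_iff_mem_periodicPts.1 (minimalPeriod_pos σ x)) k

theorem sameCycle_iff_exists_pow_apply_lt [Finite α] :
    σ.SameCycle x y ↔ ∃ k < minimalPeriod σ x, (σ ^ k) x = y := by
  constructor
  · rintro h
    obtain ⟨k, -, rfl⟩ := h.exists_pow_eq'
    exact ⟨k % minimalPeriod σ x, Nat.mod_lt _ (minimalPeriod_pos σ x),
      pow_mod_minimalPeriod_apply σ k⟩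
  · rintro ⟨k, -, rfl⟩
    exact ⟨k, zpow_natCast σ k ▸ rfl⟩

theorem SameCycle.mem_of_mapsTo [Finite α] {σ : Perm α} {s : Set α} (hs : Set.MapsTo σ s s)
    (hx : x ∈ s) (h : σ.SameCycle x y) : y ∈ s := by
  obtain ⟨k, -, rfl⟩ := h.exists_pow_eq'
  rw [← iterate_eq_pow]
  exact hs.iterate k hx

theorem map_minimalPeriod_of_forall_eq {s : Finset α} {c : ℕ}
    (h : ∀ v ∈ s, minimalPeriod σ v = c) : s.val.map (minimalPeriod σ) = replicate #s c :=
  Multiset.eq_replicate.2 ⟨Multiset.card_map _ _, fun _ hb => by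
    obtain ⟨v, hv, rfl⟩ := Multiset.mem_map.1 hb
    exact h v hv⟩

theorem pow_apply_eq_pow_apply_of_forall_lt {τ : Perm α} {k : ℕ}
    (h : ∀ m < k, τ ((σ ^ m) y) = σ ((σ ^ m) y)) : (τ ^ k) y = (σ ^ k) y := by
  induction k with
  | zero => rfl
  | succ k ih =>
    rw [pow_succ', mul_apply, ih fun m hm => h m (hm.trans k.lt_succ_self), h k k.lt_succ_self,
      ← mul_apply, ← pow_succ']

end MinimalPeriod

section CycleLengths

variable [Fintype α] (σ : Perm α) {x y : α}

def cycleLengths : Multiset ℕ := (univ : Finset α).val.map (minimalPeriod σ)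

theorem count_cycleLengths (k : ℕ) :
    count k σ.cycleLengths = #{v | minimalPeriod σ v = k} := by
  rw [cycleLengths, Multiset.count_map, Finset.card, Finset.filter_val]
  exact congrArg _ (Multiset.filter_congr fun _ _ => eq_comm)

variable [DecidableEq α]

theorem cycleLengths_eq_add (s : Finset α) :
    σ.cycleLengths = s.val.map (minimalPeriod σ) + (univ \ s).val.map (minimalPeriod σ) :=
  Finset.map_val_eq_add_sdiff (subset_univ s) _

def sameCycleFinset (x : α) : Finset α := {y | σ.SameCycle x y}

variable {σ} in
@[simp]
theorem mem_sameCycleFinset : y ∈ σ.sameCycleFinset x ↔ σ.SameCycle x y := by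
  simp [sameCycleFinset]

theorem sameCycleFinset_eq_image (x : α) :
    σ.sameCycleFinset x = (range (minimalPeriod σ x)).image fun k => (σ ^ k) x := by
  ext y
  simp [sameCycle_iff_exists_pow_apply_lt]

theorem card_sameCycleFinset (x : α) : #(σ.sameCycleFinset x) = minimalPeriod σ x := by
  rw [sameCycleFinset_eq_image, card_image_of_injOn, card_range]
  exact fun k hk l hl =>
    eq_of_pow_apply_eq_of_lt_minimalPeriod σ (Finset.mem_range.1 hk) (Finset.mem_range.1 hl)

theorem map_minimalPeriod_sameCycleFinset (x : α) :
    (σ.sameCycleFinset x).val.map (minimalPeriod σ) =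
      replicate (minimalPeriod σ x) (minimalPeriod σ x) := by
  rw [map_minimalPeriod_of_forall_eq σ fun v hv => (mem_sameCycleFinset.1 hv).minimalPeriod_eq,
    card_sameCycleFinset]

theorem mapsTo_sameCycleFinset (x : α) :
    Set.MapsTo σ (σ.sameCycleFinset x) (σ.sameCycleFinset x) := fun _ hv => by
  simpa [sameCycle_apply_right] using hv

theorem disjoint_sameCycleFinset (h : ¬σ.SameCycle x y) :
    _root_.Disjoint (σ.sameCycleFinset x) (σ.sameCycleFinset y) :=
  Finset.disjoint_left.2 fun _ hx hy =>
    h ((mem_sameCycleFinset.1 hx).trans (mem_sameCycleFinset.1 hy).symm)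

theorem support_cycleOf_eq_sameCycleFinset (hx : x ∈ σ.support) :
    (σ.cycleOf x).support = σ.sameCycleFinset x := by
  ext y
  rw [mem_support_cycleOf_iff, mem_sameCycleFinset]
  exact ⟨And.left, fun h => ⟨h, hx⟩⟩

theorem card_minimalPeriod_eq_one :
    #{v | minimalPeriod σ v = 1} = Fintype.card α - #σ.support := by
  have : ({v | minimalPeriod σ v = 1} : Finset α) = univ \ σ.support := by
    ext v
    simp [minimalPeriod_eq_one_iff_isFixedPt, IsFixedPt]
  rw [this, card_sdiff_of_subset (subset_univ _), card_univ]

theorem card_minimalPeriod_eq_of_two_le {k : ℕ} (hk : 2 ≤ k) :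
    #{v | minimalPeriod σ v = k} = k * count k σ.cycleType := by
  set F := σ.cycleFactorsFinset.filter fun c => #c.support = k
  have hunion : ({v | minimalPeriod σ v = k} : Finset α) = F.biUnion fun c => c.support := by
    ext v
    simp only [Finset.mem_filter, Finset.mem_univ, true_and, mem_biUnion, F]
    constructor
    · intro hv
      have hvs : v ∈ σ.support := by
        rw [mem_support]
        intro hfix
        have := minimalPeriod_eq_one_iff_isFixedPt.2 hfix
        omega
      refine ⟨σ.cycleOf v, ⟨cycleOf_mem_cycleFactorsFinset_iff.2 hvs, ?_⟩, ?_⟩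
      · rw [support_cycleOf_eq_sameCycleFinset σ hvs, card_sameCycleFinset, hv]
      · rw [support_cycleOf_eq_sameCycleFinset σ hvs, mem_sameCycleFinset]
    · rintro ⟨c, ⟨hc, hck⟩, hvc⟩
      have hcv : c = σ.cycleOf v := cycle_is_cycleOf hvc hc
      have hvs : v ∈ σ.support := (mem_support_cycleOf_iff.1 (hcv ▸ hvc)).2
      rw [← card_sameCycleFinset, ← support_cycleOf_eq_sameCycleFinset σ hvs, ← hcv, hck]
  have hdisj : (F : Set (Perm α)).PairwiseDisjoint fun c => c.support := fun c hc d hd hcd =>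
    (cycleFactorsFinset_pairwise_disjoint σ (Finset.mem_filter.1 hc).1
      (Finset.mem_filter.1 hd).1 hcd).disjoint_support
  rw [hunion, card_biUnion hdisj, sum_congr rfl fun c hc => (Finset.mem_filter.1 hc).2, sum_const,
    smul_eq_mul, mul_comm, cycleType_def, Multiset.count_map]
  rw [Finset.card, Finset.filter_val]
  exact congrArg (k * Multiset.card ·) (Multiset.filter_congr fun _ _ => eq_comm)

theorem cycleLengths_eq_expandParts : σ.cycleLengths = σ.partition.parts.expandParts := by
  ext k
  rw [count_cycleLengths, Multiset.count_expandParts, parts_partition, Multiset.count_add,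
    Multiset.count_replicate]
  rcases Nat.lt_trichotomy k 1 with hk | rfl | hk
  · obtain rfl : k = 0 := by omega
    simpa using fun v => (minimalPeriod_pos σ v).ne'
  · rw [Multiset.count_eq_zero.2 fun h => (one_lt_of_mem_cycleType h).ne rfl,
      card_minimalPeriod_eq_one]
    simp
  · rw [card_minimalPeriod_eq_of_two_le σ hk, if_neg (by omega), add_zero]

theorem expandParts_parts_erase_minimalPeriod (x : α) :
    (σ.partition.parts.erase (minimalPeriod σ x)).expandParts =
      (univ \ σ.sameCycleFinset x).val.map (minimalPeriod σ) := by
  refine Multiset.expandParts_erase_of_eq (minimalPeriod_pos σ x) ?_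
  rw [← cycleLengths_eq_expandParts, cycleLengths_eq_add σ (σ.sameCycleFinset x),
    map_minimalPeriod_sameCycleFinset]

theorem expandParts_parts_erase_erase_minimalPeriod (h : ¬σ.SameCycle x y) :
    ((σ.partition.parts.erase (minimalPeriod σ x)).erase (minimalPeriod σ y)).expandParts =
      (univ \ (σ.sameCycleFinset x ∪ σ.sameCycleFinset y)).val.map (minimalPeriod σ) := by
  refine Multiset.expandParts_erase_of_eq (minimalPeriod_pos σ y) ?_
  have hsub : σ.sameCycleFinset y ⊆ univ \ σ.sameCycleFinset x := fun z hz =>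
    Finset.mem_sdiff.2
      ⟨mem_univ z, fun hz' => disjoint_left.1 (disjoint_sameCycleFinset σ h) hz' hz⟩
  rw [expandParts_parts_erase_minimalPeriod, Finset.map_val_eq_add_sdiff hsub,
    map_minimalPeriod_sameCycleFinset, sdiff_sdiff_left]
  rfl

theorem sum_minimalPeriod {M : Type*} [AddCommMonoid M] (g : ℕ → M) :
    ∑ v, g (minimalPeriod σ v) = (σ.partition.parts.map fun a => a • g a).sum := by
  rw [← Multiset.sum_map_expandParts, ← cycleLengths_eq_expandParts, cycleLengths,
    Multiset.map_map, Finset.sum_eq_multiset_sum]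
  rfl

theorem sum_compl_sameCycleFinset {M : Type*} [AddCommMonoid M] (x : α) (g : ℕ → M) :
    ∑ v ∈ (σ.sameCycleFinset x)ᶜ, g (minimalPeriod σ v) =
      ((σ.partition.parts.erase (minimalPeriod σ x)).map fun b => b • g b).sum := by
  rw [← Multiset.sum_map_expandParts, expandParts_parts_erase_minimalPeriod, Multiset.map_map,
    compl_eq_univ_sdiff, Finset.sum_eq_multiset_sum]
  rfl

end CycleLengths

section MulSwap

variable [DecidableEq α] (σ : Perm α) (i j : α) {x v : α}

theorem mul_swap_apply_of_ne (hi : v ≠ i) (hj : v ≠ j) : (σ * swap i j) v = σ v := by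
  rw [mul_apply, swap_apply_of_ne_of_ne hi hj]

theorem pow_succ_mul_swap_apply {t : ℕ}
    (h : ∀ m < t, (σ ^ m) ((σ * swap i j) x) ≠ i ∧ (σ ^ m) ((σ * swap i j) x) ≠ j) :
    ((σ * swap i j) ^ (t + 1)) x = (σ ^ t) ((σ * swap i j) x) := by
  rw [pow_succ, mul_apply]
  exact pow_apply_eq_pow_apply_of_forall_lt σ fun m hm =>
    mul_swap_apply_of_ne σ i j (h m hm).1 (h m hm).2

theorem mapsTo_mul_swap {s : Set α} (hσ : Set.MapsTo σ s s) (hi : i ∈ s) (hj : j ∈ s) :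
    Set.MapsTo (σ * swap i j) s s := by
  intro v hv
  refine hσ ?_
  rcases eq_or_ne v i with rfl | hvi
  · rwa [swap_apply_left]
  rcases eq_or_ne v j with rfl | hvj
  · rwa [swap_apply_right]
  rwa [swap_apply_of_ne_of_ne hvi hvj]

theorem minimalPeriod_mul_swap_of_not_sameCycle (hi : ¬σ.SameCycle i v)
    (hj : ¬σ.SameCycle j v) : minimalPeriod (σ * swap i j) v = minimalPeriod σ v := by
  refine minimalPeriod_congr σ fun k => pow_apply_eq_pow_apply_of_forall_lt σ fun m _ => ?_
  have hv : σ.SameCycle ((σ ^ m) v) v := sameCycle_pow_left.2 (SameCycle.refl σ v)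
  exact mul_swap_apply_of_ne σ i j (fun h => hi (h ▸ hv)) (fun h => hj (h ▸ hv))

theorem map_minimalPeriod_mul_swap_sdiff [Fintype α] {s : Finset α}
    (hi : ∀ v ∉ s, ¬σ.SameCycle i v) (hj : ∀ v ∉ s, ¬σ.SameCycle j v) :
    (univ \ s).val.map (minimalPeriod (σ * swap i j)) = (univ \ s).val.map (minimalPeriod σ) :=
  Multiset.map_congr rfl fun v hv => by
    have hv : v ∉ s := (Finset.mem_sdiff.1 hv).2
    exact minimalPeriod_mul_swap_of_not_sameCycle σ i j (hi v hv) (hj v hv)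

end MulSwap

section Split

variable [DecidableEq α] (σ : Perm α) (i : α) {r : ℕ}

theorem pow_succ_mul_swap_pow_apply_left {s : ℕ} (hs : r + s < minimalPeriod σ i) :
    ((σ * swap i ((σ ^ r) i)) ^ (s + 1)) i = (σ ^ (s + (r + 1))) i := by
  have hτi : (σ * swap i ((σ ^ r) i)) i = (σ ^ (r + 1)) i := by
    rw [mul_apply, swap_apply_left, pow_succ', mul_apply]
  rw [pow_succ_mul_swap_apply, hτi, pow_apply_pow_apply]
  intro m hm
  rw [hτi, pow_apply_pow_apply]
  refine ⟨pow_apply_ne_self σ (by omega) (by omega), fun h => ?_⟩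
  have := eq_of_pow_apply_eq_of_lt_minimalPeriod σ (by omega) (by omega) h
  omega

theorem pow_succ_mul_swap_pow_apply_right {s : ℕ} (hs : s < r) (hra : r < minimalPeriod σ i) :
    ((σ * swap i ((σ ^ r) i)) ^ (s + 1)) ((σ ^ r) i) = (σ ^ (s + 1)) i := by
  have hτj : (σ * swap i ((σ ^ r) i)) ((σ ^ r) i) = (σ ^ 1) i := by
    rw [mul_apply, swap_apply_right, pow_one]
  rw [pow_succ_mul_swap_apply, hτj, pow_apply_pow_apply]
  intro m hm
  rw [hτj, pow_apply_pow_apply]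
  refine ⟨pow_apply_ne_self σ (by omega) (by omega), fun h => ?_⟩
  have := eq_of_pow_apply_eq_of_lt_minimalPeriod σ (by omega) hra h
  omega

theorem minimalPeriod_mul_swap_pow_apply_left (hra : r < minimalPeriod σ i) :
    minimalPeriod (σ * swap i ((σ ^ r) i)) i = minimalPeriod σ i - r := by
  apply minimalPeriod_eq_of_pow_apply _ (by omega)
  · obtain ⟨s, hs⟩ : ∃ s, minimalPeriod σ i - r = s + 1 :=
      ⟨minimalPeriod σ i - r - 1, by omega⟩
    rw [hs, pow_succ_mul_swap_pow_apply_left σ i (by omega),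
      show s + (r + 1) = minimalPeriod σ i by omega, pow_minimalPeriod_apply]
  · rintro (_ | s) hs0 hs
    · omega
    rw [pow_succ_mul_swap_pow_apply_left σ i (by omega)]
    exact pow_apply_ne_self σ (by omega) (by omega)

theorem minimalPeriod_mul_swap_pow_apply_right (hr : 0 < r) (hra : r < minimalPeriod σ i) :
    minimalPeriod (σ * swap i ((σ ^ r) i)) ((σ ^ r) i) = r := by
  apply minimalPeriod_eq_of_pow_apply _ hr
  · obtain ⟨s, rfl⟩ : ∃ s, r = s + 1 := ⟨r - 1, by omega⟩
    rw [pow_succ_mul_swap_pow_apply_right σ i (by omega) hra]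
  · rintro (_ | s) hs0 hs
    · omega
    rw [pow_succ_mul_swap_pow_apply_right σ i (by omega) hra]
    intro h
    have := eq_of_pow_apply_eq_of_lt_minimalPeriod σ (by omega) hra h
    omega

variable [Fintype α]

theorem not_sameCycle_mul_swap_pow_apply (hr : 0 < r) (hra : r < minimalPeriod σ i) :
    ¬(σ * swap i ((σ ^ r) i)).SameCycle i ((σ ^ r) i) := by
  rw [sameCycle_iff_exists_pow_apply_lt, minimalPeriod_mul_swap_pow_apply_left σ i hra]
  rintro ⟨_ | s, hs, h⟩
  · exact pow_apply_ne_self σ hr hra h.symm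
  · rw [pow_succ_mul_swap_pow_apply_left σ i (by omega)] at h
    have := eq_of_pow_apply_eq_of_lt_minimalPeriod σ (by omega) hra h
    omega

theorem sameCycleFinset_union_mul_swap_pow_apply (hr : 0 < r) (hra : r < minimalPeriod σ i) :
    (σ * swap i ((σ ^ r) i)).sameCycleFinset i ∪
        (σ * swap i ((σ ^ r) i)).sameCycleFinset ((σ ^ r) i) = σ.sameCycleFinset i := by
  have hi : i ∈ (σ.sameCycleFinset i : Set α) := by simpa using SameCycle.refl σ i
  have hj : (σ ^ r) i ∈ (σ.sameCycleFinset i : Set α) := by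
    simpa [sameCycle_pow_right] using SameCycle.refl σ i
  have hmaps := mapsTo_mul_swap σ i _ (mapsTo_sameCycleFinset σ i) hi hj
  refine eq_of_subset_of_card_le (union_subset ?_ ?_) ?_
  · exact fun y hy => (mem_sameCycleFinset.1 hy).mem_of_mapsTo hmaps hi
  · exact fun y hy => (mem_sameCycleFinset.1 hy).mem_of_mapsTo hmaps hj
  · rw [card_union_of_disjoint
        (disjoint_sameCycleFinset _ (not_sameCycle_mul_swap_pow_apply σ i hr hra)),
      card_sameCycleFinset, card_sameCycleFinset, card_sameCycleFinset,
      minimalPeriod_mul_swap_pow_apply_left σ i hra,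
      minimalPeriod_mul_swap_pow_apply_right σ i hr hra]
    omega

theorem parts_partition_mul_swap_pow_apply (hr : 0 < r) (hra : r < minimalPeriod σ i) :
    (σ * swap i ((σ ^ r) i)).partition.parts =
      r ::ₘ (minimalPeriod σ i - r) ::ₘ σ.partition.parts.erase (minimalPeriod σ i) := by
  have hdisj := disjoint_sameCycleFinset _ (not_sameCycle_mul_swap_pow_apply σ i hr hra)
  apply Multiset.eq_of_expandParts_eq (σ * swap i ((σ ^ r) i)).partition.zero_notMem_parts
  · simp only [Multiset.mem_cons, not_or]
    exact ⟨by omega, by omega,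
      fun h => σ.partition.zero_notMem_parts (Multiset.mem_of_mem_erase h)⟩
  rw [← cycleLengths_eq_expandParts, cycleLengths_eq_add _ (σ.sameCycleFinset i),
    ← sameCycleFinset_union_mul_swap_pow_apply σ i hr hra,
    Finset.map_val_union_of_disjoint hdisj, map_minimalPeriod_sameCycleFinset,
    map_minimalPeriod_sameCycleFinset, minimalPeriod_mul_swap_pow_apply_left σ i hra,
    minimalPeriod_mul_swap_pow_apply_right σ i hr hra,
    sameCycleFinset_union_mul_swap_pow_apply σ i hr hra,
    map_minimalPeriod_mul_swap_sdiff σ _ _ (fun v hv h => hv (mem_sameCycleFinset.2 h))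
      fun v hv h => hv (mem_sameCycleFinset.2 (sameCycle_pow_left.1 h)),
    Multiset.expandParts_cons, Multiset.expandParts_cons, expandParts_parts_erase_minimalPeriod]
  abel

end Split

section Merge

variable [DecidableEq α] (σ : Perm α) {i j : α}

theorem pow_succ_mul_swap_apply_left_of_not_sameCycle {s : ℕ} (hij : ¬σ.SameCycle i j)
    (hs : s < minimalPeriod σ j) : ((σ * swap i j) ^ (s + 1)) i = (σ ^ (s + 1)) j := by
  have hτi : (σ * swap i j) i = (σ ^ 1) j := by rw [mul_apply, swap_apply_left, pow_one]
  rw [pow_succ_mul_swap_apply, hτi, pow_apply_pow_apply]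
  intro m hm
  rw [hτi, pow_apply_pow_apply]
  exact ⟨fun h => hij (h ▸ sameCycle_pow_right.2 (SameCycle.refl σ j)).symm,
    pow_apply_ne_self σ (by omega) (by omega)⟩

theorem pow_succ_mul_swap_apply_right_of_not_sameCycle {s : ℕ} (hij : ¬σ.SameCycle i j)
    (hs : s < minimalPeriod σ i) : ((σ * swap i j) ^ (s + 1)) j = (σ ^ (s + 1)) i := by
  have hτj : (σ * swap i j) j = (σ ^ 1) i := by rw [mul_apply, swap_apply_right, pow_one]
  rw [pow_succ_mul_swap_apply, hτj, pow_apply_pow_apply]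
  intro m hm
  rw [hτj, pow_apply_pow_apply]
  exact ⟨pow_apply_ne_self σ (by omega) (by omega),
    fun h => hij (h ▸ sameCycle_pow_right.2 (SameCycle.refl σ i))⟩

variable [Fintype α]

theorem minimalPeriod_mul_swap_of_not_sameCycle_left (hij : ¬σ.SameCycle i j) :
    minimalPeriod (σ * swap i j) i = minimalPeriod σ i + minimalPeriod σ j := by
  have ha := minimalPeriod_pos σ i
  have hb := minimalPeriod_pos σ j
  have hτb : ((σ * swap i j) ^ minimalPeriod σ j) i = j := by
    obtain ⟨s, hs⟩ : ∃ s, minimalPeriod σ j = s + 1 := ⟨minimalPeriod σ j - 1, by omega⟩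
    rw [hs, pow_succ_mul_swap_apply_left_of_not_sameCycle σ hij (by omega), ← hs,
      pow_minimalPeriod_apply]
  apply minimalPeriod_eq_of_pow_apply _ (by omega)
  · obtain ⟨s, hs⟩ : ∃ s, minimalPeriod σ i = s + 1 :=
      ⟨minimalPeriod σ i - 1, by omega⟩
    rw [← pow_apply_pow_apply, hτb, hs,
      pow_succ_mul_swap_apply_right_of_not_sameCycle σ hij (by omega), ← hs,
      pow_minimalPeriod_apply]
  · intro s hs0 hs
    rcases Nat.lt_or_ge (minimalPeriod σ j) s with hbs | hsb
    · obtain ⟨t, rfl⟩ : ∃ t, s = t + 1 + minimalPeriod σ j :=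
        ⟨s - minimalPeriod σ j - 1, by omega⟩
      rw [← pow_apply_pow_apply, hτb,
        pow_succ_mul_swap_apply_right_of_not_sameCycle σ hij (by omega)]
      exact pow_apply_ne_self σ (by omega) (by omega)
    · obtain ⟨t, rfl⟩ : ∃ t, s = t + 1 := ⟨s - 1, by omega⟩
      rw [pow_succ_mul_swap_apply_left_of_not_sameCycle σ hij (by omega)]
      exact fun h => hij (h ▸ sameCycle_pow_right.2 (SameCycle.refl σ j)).symm

theorem sameCycleFinset_mul_swap_of_not_sameCycle (hij : ¬σ.SameCycle i j) :
    (σ * swap i j).sameCycleFinset i = σ.sameCycleFinset i ∪ σ.sameCycleFinset j := by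
  set S : Finset α := σ.sameCycleFinset i ∪ σ.sameCycleFinset j
  have hi : i ∈ (S : Set α) := by simpa [S] using Or.inl (SameCycle.refl σ i)
  have hj : j ∈ (S : Set α) := by simpa [S] using Or.inr (SameCycle.refl σ j)
  have hmaps : Set.MapsTo σ S S := by
    rw [coe_union]
    exact (mapsTo_sameCycleFinset σ i).union_union (mapsTo_sameCycleFinset σ j)
  have hmaps' := mapsTo_mul_swap σ i j hmaps hi hj
  refine eq_of_subset_of_card_le
    (fun y hy => (mem_sameCycleFinset.1 hy).mem_of_mapsTo hmaps' hi) ?_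
  rw [card_union_of_disjoint (disjoint_sameCycleFinset σ hij), card_sameCycleFinset,
    card_sameCycleFinset, card_sameCycleFinset, minimalPeriod_mul_swap_of_not_sameCycle_left σ hij]

theorem parts_partition_mul_swap_of_not_sameCycle (hij : ¬σ.SameCycle i j) :
    (σ * swap i j).partition.parts = (minimalPeriod σ i + minimalPeriod σ j) ::ₘ
      ((σ.partition.parts.erase (minimalPeriod σ i)).erase (minimalPeriod σ j)) := by
  apply Multiset.eq_of_expandParts_eq (σ * swap i j).partition.zero_notMem_parts
  · simp only [Multiset.mem_cons, not_or]
    exact ⟨by have := minimalPeriod_pos σ i; omega, fun h => σ.partition.zero_notMem_parts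
      (Multiset.mem_of_mem_erase (Multiset.mem_of_mem_erase h))⟩
  rw [← cycleLengths_eq_expandParts,
    cycleLengths_eq_add _ (σ.sameCycleFinset i ∪ σ.sameCycleFinset j),
    ← sameCycleFinset_mul_swap_of_not_sameCycle σ hij, map_minimalPeriod_sameCycleFinset,
    minimalPeriod_mul_swap_of_not_sameCycle_left σ hij,
    sameCycleFinset_mul_swap_of_not_sameCycle σ hij,
    map_minimalPeriod_mul_swap_sdiff σ _ _ (fun v hv h => hv (by simp [h]))
      fun v hv h => hv (by simp [h]),
    Multiset.expandParts_cons, expandParts_parts_erase_erase_minimalPeriod σ hij]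

end Merge

theorem sum_parts_partition_mul_swap [Fintype α] [DecidableEq α] (σ : Perm α) (i : α)
    {M : Type*} [AddCommMonoid M] (f : Multiset ℕ → M) :
    ∑ j, f (σ * swap i j).partition.parts =
      f σ.partition.parts
      + ∑ r ∈ Ico 1 (minimalPeriod σ i),
          f (r ::ₘ (minimalPeriod σ i - r) ::ₘ σ.partition.parts.erase (minimalPeriod σ i))
      + ((σ.partition.parts.erase (minimalPeriod σ i)).map fun b =>
          b • f ((minimalPeriod σ i + b) ::ₘ
            (σ.partition.parts.erase (minimalPeriod σ i)).erase b)).sum := by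
  set a := minimalPeriod σ i
  have hsame : ∑ j ∈ σ.sameCycleFinset i, f (σ * swap i j).partition.parts =
      f σ.partition.parts +
        ∑ r ∈ Ico 1 a, f (r ::ₘ (a - r) ::ₘ σ.partition.parts.erase a) := by
    rw [sameCycleFinset_eq_image, sum_image fun k hk l hl =>
      eq_of_pow_apply_eq_of_lt_minimalPeriod σ (Finset.mem_range.1 hk) (Finset.mem_range.1 hl),
      range_eq_Ico, sum_eq_sum_Ico_succ_bot (minimalPeriod_pos σ i), pow_zero, one_apply,
      swap_self, ← one_def, mul_one]
    congr 1
    exact sum_congr rfl fun r hr => by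
      rw [parts_partition_mul_swap_pow_apply σ i (Finset.mem_Ico.1 hr).1 (Finset.mem_Ico.1 hr).2]
  have hother : ∑ j ∈ (σ.sameCycleFinset i)ᶜ, f (σ * swap i j).partition.parts =
      ((σ.partition.parts.erase a).map fun b =>
        b • f ((a + b) ::ₘ (σ.partition.parts.erase a).erase b)).sum := by
    rw [← sum_compl_sameCycleFinset]
    refine sum_congr rfl fun j hj => ?_
    rw [parts_partition_mul_swap_of_not_sameCycle σ (by simpa using hj)]
  rw [← sum_add_sum_compl (σ.sameCycleFinset i), hsame, hother]

end Equiv.Perm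

section Lumping

variable {X Y : Type*} [Fintype X] [Fintype Y]

theorem tvDist_comp_equiv (μ ν : Y → ℝ) (e : X ≃ Y) :
    tvDist (μ ∘ e) (ν ∘ e) = tvDist μ ν := by
  unfold tvDist
  rw [← Equiv.sum_comp e]
  rfl

variable [DecidableEq Y]

theorem tvDist_eq_tvDist_map (f : X → Y) (μ ν : X → ℝ)
    (hμν : ∀ x x', f x = f x' → μ x - ν x = μ x' - ν x') :
    tvDist μ ν =
      tvDist (fun y => ∑ x with f x = y, μ x) (fun y => ∑ x with f x = y, ν x) := by
  unfold tvDist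
  rw [← Finset.sum_fiberwise Finset.univ f]
  congr 1
  refine Finset.sum_congr rfl fun y _ => ?_
  rw [← Finset.sum_sub_distrib]
  exact Finset.sum_abs_of_forall_eq fun x hx x' hx' =>
    hμν x x' ((Finset.mem_filter.1 hx).2.trans (Finset.mem_filter.1 hx').2.symm)

variable [DecidableEq X]

theorem Matrix.pow_apply_equiv_apply_equiv {R : Type*} [Semiring R] (A : Matrix X X R) (e : X ≃ X)
    (h : ∀ x y, A (e x) (e y) = A x y) (t : ℕ) (x y : X) :
    (A ^ t) (e x) (e y) = (A ^ t) x y := by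
  have hA : Matrix.reindex e.symm e.symm A = A := Matrix.ext fun x y => h x y
  have := congrArg (· x y) (map_pow (Matrix.reindexAlgEquiv ℕ R e.symm) A t)
  simpa [hA] using this

theorem Matrix.sum_fiber_pow {R : Type*} [CommSemiring R] (A : Matrix X X R) (B : Matrix Y Y R)
    (f : X → Y) (h : ∀ x y, ∑ x' with f x' = y, A x x' = B (f x) y) (t : ℕ) (x : X)
    (y : Y) :
    ∑ x' with f x' = y, (A ^ t) x x' = (B ^ t) (f x) y := by
  induction t generalizing y with
  | zero => simp [Matrix.one_apply, Finset.sum_ite_eq]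
  | succ t ih =>
    simp_rw [pow_succ, Matrix.mul_apply]
    rw [Finset.sum_comm]
    simp_rw [← Finset.mul_sum, h]
    rw [← Finset.sum_fiberwise Finset.univ f]
    refine Finset.sum_congr rfl fun w _ => ?_
    rw [← ih w, Finset.sum_mul]
    exact Finset.sum_congr rfl fun z hz => by rw [(Finset.mem_filter.1 hz).2]

end Lumping

section RandomTransposition

open Equiv Equiv.Perm Finset

variable {n : ℕ}

theorem parts_cyc (σ : Perm (Fin n)) : (cyc n σ).parts = σ.partition.parts :=
  Nat.Partition.parts_cast (Fintype.card_fin n) _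

theorem smKernel_eq_sum_div (p q : n.Partition) :
    smKernel n p q =
      ((n : ℝ) * (if q = p then 1 else 0)
        + (p.parts.map fun a => a • ∑ r ∈ Ico 1 a,
            if q.parts = r ::ₘ (a - r) ::ₘ p.parts.erase a then (1 : ℝ) else 0).sum
        + (p.parts.map fun a => a • ((p.parts.erase a).map fun b =>
            b • if q.parts = (a + b) ::ₘ (p.parts.erase a).erase b then (1 : ℝ) else 0).sum
          ).sum)
      / (n : ℝ) ^ 2 := by
  rw [smKernel, add_div, add_div, ← Multiset.sum_map_div, ← Multiset.sum_map_div]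
  congr 1
  congr 1
  · rcases eq_or_ne (n : ℝ) 0 with hn | hn
    · simp [hn]
    · split_ifs
      · field_simp
      · simp
  · refine congrArg Multiset.sum (Multiset.map_congr rfl fun a _ => ?_)
    rw [nsmul_eq_mul, Finset.mul_sum, Finset.sum_div]
    refine sum_congr rfl fun r _ => ?_
    split_ifs <;> ring
  · refine congrArg Multiset.sum (Multiset.map_congr rfl fun a _ => ?_)
    rw [nsmul_eq_mul, ← Multiset.sum_map_mul_left, ← Multiset.sum_map_div]
    refine congrArg Multiset.sum (Multiset.map_congr rfl fun b _ => ?_)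
    split_ifs <;> simp only [nsmul_eq_mul] <;> ring

theorem sum_fiber_rtMatrix (σ : Perm (Fin n)) (q : n.Partition) :
    ∑ β with cyc n β = q, rtMatrix n σ β = smKernel n (cyc n σ) q := by
  have hcount : ∑ β with cyc n β = q, rtMatrix n σ β =
      (∑ i, ∑ j, if q.parts = (σ * Equiv.swap i j).partition.parts then (1 : ℝ) else 0) /
        (n : ℝ) ^ 2 := by
    simp only [rtMatrix, ← Finset.sum_div, Finset.card_filter, Nat.cast_sum, Nat.cast_ite,
      Nat.cast_one, Nat.cast_zero, Finset.sum_filter, ite_sum_zero]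
    rw [Finset.sum_comm, Fintype.sum_prod_type]
    refine congrArg (· / _) (sum_congr rfl fun i _ => sum_congr rfl fun j _ => ?_)
    simp only [Nat.Partition.ext_iff, parts_cyc]
    rw [Finset.sum_eq_single_of_mem (σ * Equiv.swap i j) (mem_univ _) fun b _ hb => by
      simp [Ne.symm hb]]
    simp [eq_comm]
  rw [hcount, smKernel_eq_sum_div, parts_cyc]
  rw [sum_congr rfl fun i _ =>
      sum_parts_partition_mul_swap σ i fun M => if q.parts = M then (1 : ℝ) else 0,
    sum_add_distrib, sum_add_distrib, sum_const, card_univ]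
  congr 2
  · congr 1
    · simp [Nat.Partition.ext_iff, parts_cyc]
    · exact sum_minimalPeriod σ fun a =>
        ∑ r ∈ Ico 1 a,
          if q.parts = r ::ₘ (a - r) ::ₘ σ.partition.parts.erase a then (1 : ℝ) else 0
  · exact sum_minimalPeriod σ fun a => ((σ.partition.parts.erase a).map fun b =>
        b • if q.parts = (a + b) ::ₘ (σ.partition.parts.erase a).erase b then (1 : ℝ) else 0
      ).sum

theorem rtMatrix_mul_left (g σ β : Perm (Fin n)) :
    rtMatrix n (g * σ) (g * β) = rtMatrix n σ β := by
  simp only [rtMatrix, mul_assoc, mul_right_inj]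

theorem rtMatrix_conj (g σ β : Perm (Fin n)) :
    rtMatrix n (g * σ * g⁻¹) (g * β * g⁻¹) = rtMatrix n σ β := by
  unfold rtMatrix
  congr 2
  refine (card_equiv (Equiv.prodCongr g g) fun ij => ?_).symm
  simp only [mem_filter, mem_univ, true_and, Equiv.prodCongr_apply, Prod.map_fst, Prod.map_snd]
  rw [swap_apply_apply]
  simp only [mul_assoc, inv_mul_cancel_left, mul_right_inj]
  rw [← mul_assoc, mul_left_inj]

theorem rtMatrix_pow_one_apply_eq_of_cyc_eq (t : ℕ) {β β' : Perm (Fin n)}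
    (h : cyc n β = cyc n β') : (rtMatrix n ^ t) 1 β = (rtMatrix n ^ t) 1 β' := by
  have hconj : IsConj β β' :=
    partition_eq_of_isConj.2 (Nat.Partition.ext (by rw [← parts_cyc, ← parts_cyc, h]))
  obtain ⟨c, rfl⟩ := isConj_iff.1 hconj
  have := Matrix.pow_apply_equiv_apply_equiv _ (MulAut.conj c).toEquiv (rtMatrix_conj c) t 1 β
  simpa using this.symm

theorem tvDist_rtMatrix_pow_apply_eq_one (t : ℕ) (α : Perm (Fin n)) :
    tvDist ((rtMatrix n ^ t) α) (rtPi n) = tvDist ((rtMatrix n ^ t) 1) (rtPi n) := by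
  rw [← tvDist_comp_equiv _ _ (Equiv.mulLeft α)]
  congr 1
  funext β
  simpa using Matrix.pow_apply_equiv_apply_equiv _ (Equiv.mulLeft α) (rtMatrix_mul_left α) t 1 β

theorem tvDist_rtMatrix_pow_one_eq_smMatrix (t : ℕ) :
    tvDist ((rtMatrix n ^ t) 1) (rtPi n) = tvDist ((smMatrix n ^ t) (cyc n 1)) (smPi n) := by
  rw [tvDist_eq_tvDist_map (cyc n) _ _ fun β β' h => by
    rw [rtMatrix_pow_one_apply_eq_of_cyc_eq t h]; rfl]
  congr 1
  · funext q
    exact Matrix.sum_fiber_pow _ _ _ sum_fiber_rtMatrix t 1 q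
  · funext q
    simp [smPi, rtPi, div_eq_mul_inv]

end RandomTransposition

theorem rt_distance_le_sm_distance_general (n : ℕ) (t : ℕ) :
    (⨆ α : Equiv.Perm (Fin n), tvDist ((rtMatrix n ^ t) α) (rtPi n)) ≤
      ⨆ σ : Nat.Partition n, tvDist ((smMatrix n ^ t) σ) (smPi n) := by
  refine ciSup_le fun α => ?_
  rw [tvDist_rtMatrix_pow_apply_eq_one, tvDist_rtMatrix_pow_one_eq_smMatrix]
  exact le_ciSup (f := fun σ => tvDist ((smMatrix n ^ t) σ) (smPi n))
    (Set.finite_range _).bddAbove (cyc n 1)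

/-- The distance to stationarity of the random transposition walk is bounded by that of
the split-merge chain. -/
theorem rt_distance_le_sm_distance (n : ℕ) (hn : 1 ≤ n) (t : ℕ) :
    (⨆ α : Equiv.Perm (Fin n), tvDist ((rtMatrix n ^ t) α) (rtPi n)) ≤
      ⨆ σ : Nat.Partition n, tvDist ((smMatrix n ^ t) σ) (smPi n) :=
  rt_distance_le_sm_distance_general n t

end
end

section
/- Let n ≥ 1 and let σ ≠ τ be two permutations in S_n. For any coupling (X₁, Y₁) of one step of the random transposition walk from σ and one step from τ (i.e., any joint distribution on S_n × S_n whose first marginal is P̄(σ,·) and whose second marginal is P̄(τ,·)), the probability that X₁ = Y₁ is at most 6/n². -/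
noncomputable section
open scoped BigOperators Classical

/-!
Write `ρ = τ⁻¹σ ≠ 1`. A state `a` with `μ (a, a) > 0` is reachable in one step from both `σ` and
`τ`, so `s = σ⁻¹a` and `ρ s = τ⁻¹a` are both transpositions or the identity. Fixing a point `x`
moved by `ρ`, the value `s x` determines `s` and lies in `{x, ρ x, ρ⁻¹ x}`, so there are at most
three such states. Each of them differs from `σ` or from `τ`, and a given non-identity permutation
arises from at most two of the `n²` pairs `(i, j)`, so each carries mass at most `2/n²`.
-/

open Finset

namespace Equiv.Perm

variable {α : Type*} [DecidableEq α]

/-- `swap x x = 1`, so this says that `f` is a transposition or the identity. -/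
def IsSwapOrOne (f : Perm α) : Prop := ∃ x y, f = swap x y

theorem IsSwapOrOne.eq_swap_apply {f : Perm α} (hf : f.IsSwapOrOne) {x : α} (hx : f x ≠ x) :
    f = swap x (f x) := by
  obtain ⟨i, j, rfl⟩ := hf
  obtain ⟨-, rfl | rfl⟩ := swap_apply_ne_self_iff.mp hx
  · rw [swap_apply_left]
  · rw [swap_apply_right, swap_comm]

theorem IsSwapOrOne.apply_mem_of_mul {ρ s : Perm α} (hs : s.IsSwapOrOne)
    (hρs : (ρ * s).IsSwapOrOne) {x : α} (hx : ρ x ≠ x) :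
    s x ∈ ({x, ρ x, ρ⁻¹ x} : Finset α) := by
  simp only [mem_insert, mem_singleton]
  by_cases hsx : s x = x
  · exact Or.inl hsx
  by_cases hsρ : s x = ρ x
  · exact Or.inr (Or.inl hsρ)
  have hs_eq : s = swap x (s x) := hs.eq_swap_apply hsx
  have hss : s (s x) = x := by nth_rewrite 1 [hs_eq]; exact swap_apply_right _ _
  have hρs_apply : (ρ * s) (s x) = ρ x := by rw [mul_apply, hss]
  have hρs_eq : ρ * s = swap (s x) (ρ x) := by
    have := hρs.eq_swap_apply (x := s x) (by rw [hρs_apply]; exact Ne.symm hsρ)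
    rwa [hρs_apply] at this
  -- `ρ (s x) = (ρ * s) x`, and this transposition fixes `x`
  have hρ : ρ (s x) = x := by
    rw [← mul_apply, hρs_eq, swap_apply_of_ne_of_ne (Ne.symm hsx) (Ne.symm hx)]
  exact Or.inr (Or.inr (eq_inv_iff_eq.mpr hρ))

theorem IsSwapOrOne.eq_of_apply_eq {ρ s s' : Perm α} (hs : s.IsSwapOrOne)
    (hs' : s'.IsSwapOrOne) (hρs : (ρ * s).IsSwapOrOne) (hρs' : (ρ * s').IsSwapOrOne)
    {x : α} (hx : ρ x ≠ x) (h : s x = s' x) : s = s' := by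
  by_cases hsx : s x = x
  · -- then `ρ * s` and `ρ * s'` both move `x` to `ρ x`, so both equal `swap x (ρ x)`
    have hρs_x : (ρ * s) x = ρ x := by rw [mul_apply, hsx]
    have hρs'_x : (ρ * s') x = ρ x := by rw [mul_apply, ← h, hsx]
    have e := hρs.eq_swap_apply (x := x) (by rwa [hρs_x])
    have e' := hρs'.eq_swap_apply (x := x) (by rwa [hρs'_x])
    rw [hρs_x] at e
    rw [hρs'_x] at e'
    exact mul_left_cancel (e.trans e'.symm)
  · rw [hs.eq_swap_apply hsx, hs'.eq_swap_apply (h ▸ hsx), h]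

variable [Fintype α]

theorem card_filter_isSwapOrOne_le_three {σ τ : Perm α} (h : σ ≠ τ) :
    #{a | (σ⁻¹ * a).IsSwapOrOne ∧ (τ⁻¹ * a).IsSwapOrOne} ≤ 3 := by
  obtain ⟨x, hx⟩ : ∃ x, (τ⁻¹ * σ) x ≠ x := by
    by_contra! hfix
    exact h (inv_mul_eq_one.mp (Equiv.ext hfix)).symm
  have hmul : ∀ a : Perm α, τ⁻¹ * σ * (σ⁻¹ * a) = τ⁻¹ * a := fun a => by group
  calc _ ≤ #({x, (τ⁻¹ * σ) x, (τ⁻¹ * σ)⁻¹ x} : Finset α) := by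
        refine card_le_card_of_injOn (fun a => (σ⁻¹ * a) x) (fun a ha => ?_)
          (fun a ha a' ha' haa' => ?_)
        · obtain ⟨-, hσa, hτa⟩ := mem_filter.mp ha
          exact hσa.apply_mem_of_mul (by rwa [hmul]) hx
        · obtain ⟨-, hσa, hτa⟩ := mem_filter.mp ha
          obtain ⟨-, hσa', hτa'⟩ := mem_filter.mp ha'
          exact mul_left_cancel (hσa.eq_of_apply_eq hσa' (by rwa [hmul]) (by rwa [hmul]) hx haa')
    _ ≤ 3 := card_le_three

theorem card_filter_swap_eq_le_two {f : Perm α} (hf : f ≠ 1) :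
    #{p : α × α | swap p.1 p.2 = f} ≤ 2 := by
  obtain ⟨x, hx⟩ : ∃ x, f x ≠ x := by
    by_contra! hfix
    exact hf (Equiv.ext hfix)
  calc _ ≤ #({(x, f x), (f x, x)} : Finset (α × α)) := by
        refine card_le_card fun ⟨i, j⟩ hij => ?_
        simp only [mem_filter, mem_univ, true_and] at hij
        subst hij
        simp only [mem_insert, mem_singleton, Prod.mk.injEq]
        obtain ⟨-, rfl | rfl⟩ := swap_apply_ne_self_iff.mp hx
        · simp
        · simp
    _ ≤ 2 := card_le_two

end Equiv.Perm

open Equiv.Perm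

theorem rtMatrix_eq_card_div (n : ℕ) (g a : Equiv.Perm (Fin n)) :
    rtMatrix n g a = #{p : Fin n × Fin n | Equiv.swap p.1 p.2 = g⁻¹ * a} / (n : ℝ) ^ 2 := by
  unfold rtMatrix
  congr 3
  ext p
  simp only [mem_filter, mem_univ, true_and]
  exact eq_inv_mul_iff_mul_eq.symm

theorem rtMatrix_le_of_ne {n : ℕ} {g a : Equiv.Perm (Fin n)} (h : g ≠ a) :
    rtMatrix n g a ≤ 2 / (n : ℝ) ^ 2 := by
  rw [rtMatrix_eq_card_div]
  gcongr
  exact_mod_cast card_filter_swap_eq_le_two fun h1 => h (inv_mul_eq_one.mp h1)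

theorem isSwapOrOne_of_rtMatrix_pos {n : ℕ} {g a : Equiv.Perm (Fin n)}
    (h : 0 < rtMatrix n g a) : (g⁻¹ * a).IsSwapOrOne := by
  rw [rtMatrix_eq_card_div] at h
  have hcard : #{p : Fin n × Fin n | Equiv.swap p.1 p.2 = g⁻¹ * a} ≠ 0 := fun h0 => by
    simp [h0] at h
  obtain ⟨⟨i, j⟩, hij⟩ := card_ne_zero.mp hcard
  exact ⟨i, j, (mem_filter.mp hij).2.symm⟩

theorem one_step_meeting_prob_le_general (n : ℕ) (σ τ : Equiv.Perm (Fin n))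
    (hne : σ ≠ τ) (μ : Equiv.Perm (Fin n) × Equiv.Perm (Fin n) → ℝ)
    (hpos : ∀ z, 0 ≤ μ z)
    (h1 : ∀ a, ∑ b, μ (a, b) = rtMatrix n σ a)
    (h2 : ∀ b, ∑ a, μ (a, b) = rtMatrix n τ b) :
    ∑ a, μ (a, a) ≤ 6 / (n : ℝ) ^ 2 := by
  have hσ a : μ (a, a) ≤ rtMatrix n σ a :=
    h1 a ▸ single_le_sum (fun b _ => hpos (a, b)) (mem_univ a)
  have hτ a : μ (a, a) ≤ rtMatrix n τ a :=
    h2 a ▸ single_le_sum (fun b _ => hpos (b, a)) (mem_univ a)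
  have hle a : μ (a, a) ≤ 2 / (n : ℝ) ^ 2 := by
    rcases eq_or_ne σ a with rfl | hσa
    · exact (hτ _).trans (rtMatrix_le_of_ne hne.symm)
    · exact (hσ a).trans (rtMatrix_le_of_ne hσa)
  set T := ({a | (σ⁻¹ * a).IsSwapOrOne ∧ (τ⁻¹ * a).IsSwapOrOne} : Finset _)
  have hsupp a (_ : a ∈ univ) (ha : a ∉ T) : μ (a, a) = 0 := by
    by_contra h0
    have hμ : 0 < μ (a, a) := (hpos (a, a)).lt_of_ne' h0
    exact ha (mem_filter.mpr ⟨mem_univ a, isSwapOrOne_of_rtMatrix_pos (hμ.trans_le (hσ a)),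
      isSwapOrOne_of_rtMatrix_pos (hμ.trans_le (hτ a))⟩)
  calc ∑ a, μ (a, a) = ∑ a ∈ T, μ (a, a) := (sum_subset (subset_univ T) hsupp).symm
    _ ≤ #T • (2 / (n : ℝ) ^ 2) := sum_le_card_nsmul T _ _ fun a _ => hle a
    _ ≤ 3 • (2 / (n : ℝ) ^ 2) := by
        gcongr
        exact card_filter_isSwapOrOne_le_three hne
    _ = 6 / (n : ℝ) ^ 2 := by rw [nsmul_eq_mul]; ring

/-- For any one-step coupling of the random transposition walk from `σ ≠ τ`, the
probability of meeting is at most `6/n²`. -/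
theorem one_step_meeting_prob_le (n : ℕ) (hn : 1 ≤ n) (σ τ : Equiv.Perm (Fin n))
    (hne : σ ≠ τ) (μ : Equiv.Perm (Fin n) × Equiv.Perm (Fin n) → ℝ)
    (hpos : ∀ z, 0 ≤ μ z)
    (h1 : ∀ a, ∑ b, μ (a, b) = rtMatrix n σ a)
    (h2 : ∀ b, ∑ a, μ (a, b) = rtMatrix n τ b) :
    ∑ a, μ (a, a) ≤ 6 / (n : ℝ) ^ 2 :=
  one_step_meeting_prob_le_general n σ τ hne μ hpos h1 h2
end
end

section
/- For every n ≥ 1 and every pair of partitions σ, τ of n with ρ(σ,τ) = 1, there exists a coupling (X₁, Y₁) of one step of the split-merge chain from σ and one step from τ such that almost surely ρ(X₁, Y₁) ≤ 1, and ℙ(X₁ = Y₁) ≥ 4·s(σ,τ)/n². -/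
noncomputable section
open scoped BigOperators Classical

/-!
Choosing an ordered pair of points of `{1, …, n}` uniformly (as for a random transposition) and
splitting or merging accordingly realises one split-merge step, so the step from a partition with
parts `M` is `count · / n²` on a multiset `stepOutcomes n M` of `n²` outcomes. A coupling is then a
multiset of `n²` pairs whose two projections are the outcome multisets of `σ` and of `τ`.

For `σ = L + {b, c}` and `τ = L + {b + c}` with `b ≤ c`, moves inside `L` are matched with
themselves, merging `d ∈ L` with `b` or with `c` is matched with merging `d` with `b + c`, and
splitting `b` or `c` at `r` is matched with splitting `b + c` at `r`. Left over are, on the side of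
`σ`, its `n` stays and `2bc` merges of `b` with `c`, and on the side of `τ`, its `n` stays and `2bc`
splits of `b + c`, at least `2b` of which give back `σ`. Pairing `2b` stays of `σ` with such splits
and `2b` merges of `b` with `c` with stays of `τ` puts `4b` of the `n²` pairs on the diagonal, and
every pair differs by at most one merge.
-/

namespace Multiset

theorem map_finsetSum {α β ι : Type*} (f : α → β) (s : Finset ι) (g : ι → Multiset α) :
    (∑ i ∈ s, g i).map f = ∑ i ∈ s, (g i).map f := by
  rw [← coe_mapAddMonoidHom, map_sum]

theorem sum_count_eq_count_map_fst {α β ι : Type*} [Fintype ι] [DecidableEq α] [DecidableEq β]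
    {g : ι → β} (hg : Function.Injective g) {W : Multiset (α × β)}
    (hW : ∀ z ∈ W, ∃ i, g i = z.2) (x : α) :
    ∑ i, W.count (x, g i) = (W.map Prod.fst).count x := by
  induction W using Multiset.induction_on with
  | empty => simp
  | cons z W ih =>
    obtain ⟨i₀, hi₀⟩ := hW z (mem_cons_self z W)
    have hpair : ∀ i, ((x, g i) = z ↔ x = z.1 ∧ i = i₀) := fun i => by
      rw [Prod.ext_iff, ← hi₀, hg.eq_iff]
    simp only [count_cons, map_cons, Finset.sum_add_distrib, hpair,
      ih fun z hz => hW z (mem_cons_of_mem hz)]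
    by_cases hx : x = z.1 <;> simp [hx]

theorem cons_singleton_erase (b c : ℕ) : (b ::ₘ {c}).erase c = {b} := by
  rcases eq_or_ne b c with rfl | h
  · simp
  · simp [erase_cons_tail, h]

end Multiset

namespace SplitMerge

open Multiset

def splitOutcomes (M : Multiset ℕ) : Multiset (Multiset ℕ) :=
  M.bind fun a => ∑ r ∈ Finset.Ico 1 a, replicate a (r ::ₘ (a - r) ::ₘ M.erase a)

def mergeOutcomes (M : Multiset ℕ) : Multiset (Multiset ℕ) :=
  M.bind fun a => (M.erase a).bind fun d => replicate (a * d) ((a + d) ::ₘ (M.erase a).erase d)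

def stepOutcomes (n : ℕ) (M : Multiset ℕ) : Multiset (Multiset ℕ) :=
  replicate n M + splitOutcomes M + mergeOutcomes M

theorem smKernel_eq_count {n : ℕ} (hn : n ≠ 0) (p q : Nat.Partition n) :
    smKernel n p q = (stepOutcomes n p.parts).count q.parts / (n : ℝ) ^ 2 := by
  simp only [smKernel, stepOutcomes, splitOutcomes, mergeOutcomes, count_add, count_bind,
    count_replicate, count_sum', Nat.cast_add, Nat.cast_multiset_sum, map_map, Function.comp_def,
    add_div, ← sum_map_div, Nat.cast_ite, Nat.cast_zero, Nat.cast_mul, ite_div, zero_div,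
    Nat.cast_sum, Finset.sum_div]
  simp only [@eq_comm _ _ q.parts, Nat.Partition.ext_iff]
  rw [show (n : ℝ) / n ^ 2 = 1 / n by field_simp]

theorem exists_parts_of_mem_stepOutcomes {n : ℕ} (p : Nat.Partition n) {X : Multiset ℕ}
    (hX : X ∈ stepOutcomes n p.parts) : ∃ q : Nat.Partition n, q.parts = X := by
  suffices h : (∀ i ∈ X, 0 < i) ∧ X.sum = n from ⟨⟨X, h.1 _, h.2⟩, rfl⟩
  have hpos : ∀ {i}, i ∈ p.parts → 0 < i := p.parts_pos
  have hsum := p.parts_sum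
  simp only [stepOutcomes, splitOutcomes, mergeOutcomes, mem_add, mem_replicate, mem_bind, mem_sum,
    Finset.mem_Ico] at hX
  rcases hX with (⟨-, rfl⟩ | ⟨a, ha, r, ⟨hr, hra⟩, -, rfl⟩) | ⟨a, ha, d, hd, -, rfl⟩
  · exact ⟨fun i hi => hpos hi, hsum⟩
  · refine ⟨fun i hi => ?_, ?_⟩
    · rcases mem_cons.1 hi with rfl | hi
      · omega
      rcases mem_cons.1 hi with rfl | hi
      · omega
      exact hpos (mem_of_mem_erase hi)
    · have := sum_erase ha
      simp only [sum_cons]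
      omega
  · refine ⟨fun i hi => ?_, ?_⟩
    · rcases mem_cons.1 hi with rfl | hi
      · exact Nat.add_pos_left (hpos ha) d
      exact hpos (mem_of_mem_erase (mem_of_mem_erase hi))
    · have := sum_erase ha
      have := sum_erase hd
      simp only [sum_cons]
      omega

def lawOf (n : ℕ) (W : Multiset (Multiset ℕ × Multiset ℕ))
    (z : Nat.Partition n × Nat.Partition n) : ℝ :=
  W.count (z.1.parts, z.2.parts) / (n : ℝ) ^ 2

theorem isOneStepCoupling_lawOf {n : ℕ} (hn : n ≠ 0) {σ τ : Nat.Partition n}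
    {W : Multiset (Multiset ℕ × Multiset ℕ)} (h₁ : W.map Prod.fst = stepOutcomes n σ.parts)
    (h₂ : W.map Prod.snd = stepOutcomes n τ.parts) : IsOneStepCoupling n σ τ (lawOf n W) := by
  have hparts : Function.Injective (Nat.Partition.parts (n := n)) := fun _ _ => Nat.Partition.ext
  have hfst : ∀ z ∈ W, ∃ p : Nat.Partition n, p.parts = z.1 := fun z hz =>
    exists_parts_of_mem_stepOutcomes σ (h₁ ▸ mem_map_of_mem _ hz)
  have hsnd : ∀ z ∈ W, ∃ q : Nat.Partition n, q.parts = z.2 := fun z hz =>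
    exists_parts_of_mem_stepOutcomes τ (h₂ ▸ mem_map_of_mem _ hz)
  refine ⟨fun z => by unfold lawOf; positivity, fun p => ?_, fun q => ?_⟩
  · rw [smKernel_eq_count hn, ← h₁, ← sum_count_eq_count_map_fst hparts hsnd]
    simp [lawOf, Finset.sum_div]
  · have hswap : ∀ z ∈ W.map Prod.swap, ∃ p : Nat.Partition n, p.parts = z.2 := by
      simp only [mem_map]
      rintro _ ⟨z, hz, rfl⟩
      exact hfst z hz
    rw [smKernel_eq_count hn, ← h₂, show W.map Prod.snd = (W.map Prod.swap).map Prod.fst by simp,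
      ← sum_count_eq_count_map_fst hparts hswap]
    simp [lawOf, Finset.sum_div, ← count_map_eq_count' Prod.swap W Prod.swap_injective]

theorem splitOutcomes_add (A B : Multiset ℕ) :
    splitOutcomes (A + B) =
      (splitOutcomes A).map (· + B) + (splitOutcomes B).map (A + ·) := by
  simp only [splitOutcomes, add_bind, Multiset.map_bind, map_finsetSum]
  congr 1
  · refine Multiset.bind_congr fun a ha => ?_
    simp [erase_add_left_pos B ha]
  · refine Multiset.bind_congr fun a ha => ?_
    simp [erase_add_right_pos A ha]

def crossMerges (A B : Multiset ℕ) : Multiset (Multiset ℕ) :=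
  A.bind fun a => B.bind fun d => replicate (a * d) ((a + d) ::ₘ A.erase a + B.erase d)

theorem crossMerges_comm (A B : Multiset ℕ) : crossMerges B A = crossMerges A B := by
  rw [crossMerges, crossMerges, bind_bind]
  refine Multiset.bind_congr fun a _ => Multiset.bind_congr fun d _ => ?_
  rw [mul_comm d a, add_comm d a, cons_add, cons_add, add_comm (B.erase d)]

theorem mergeOutcomes_add (A B : Multiset ℕ) :
    mergeOutcomes (A + B) =
      (mergeOutcomes A).map (· + B) + (mergeOutcomes B).map (A + ·) +
        crossMerges A B + crossMerges A B := by
  have hA : (A.bind fun a => ((A + B).erase a).bind fun d =>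
        replicate (a * d) ((a + d) ::ₘ ((A + B).erase a).erase d)) =
      (mergeOutcomes A).map (· + B) + crossMerges A B := by
    simp only [mergeOutcomes, crossMerges, Multiset.map_bind, map_replicate, ← bind_add]
    refine Multiset.bind_congr fun a ha => ?_
    rw [erase_add_left_pos B ha, add_bind]
    congr 1
    · refine Multiset.bind_congr fun d hd => ?_
      simp [erase_add_left_pos B hd]
    · refine Multiset.bind_congr fun d hd => ?_
      simp [erase_add_right_pos _ hd]
  have hB : (B.bind fun a => ((A + B).erase a).bind fun d =>
        replicate (a * d) ((a + d) ::ₘ ((A + B).erase a).erase d)) =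
      (mergeOutcomes B).map (A + ·) + crossMerges A B := by
    rw [← crossMerges_comm]
    simp only [mergeOutcomes, crossMerges, Multiset.map_bind, map_replicate, ← bind_add]
    refine Multiset.bind_congr fun a ha => ?_
    rw [erase_add_right_pos A ha, add_bind, add_comm]
    congr 1
    · refine Multiset.bind_congr fun d hd => ?_
      simp [erase_add_right_pos _ hd]
    · refine Multiset.bind_congr fun d hd => ?_
      simp [erase_add_left_pos _ hd, add_comm]
  rw [mergeOutcomes, add_bind, hA, hB]
  abel

theorem stepOutcomes_add (n : ℕ) (A B : Multiset ℕ) :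
    stepOutcomes n (A + B) = replicate n (A + B) +
      (splitOutcomes A + mergeOutcomes A).map (· + B) +
      (splitOutcomes B + mergeOutcomes B).map (A + ·) + 2 • crossMerges A B := by
  rw [stepOutcomes, splitOutcomes_add, mergeOutcomes_add, map_add, map_add]
  abel

theorem splitOutcomes_singleton (m : ℕ) :
    splitOutcomes {m} = ∑ r ∈ Finset.Ico 1 m, replicate m {r, m - r} := by
  simp [splitOutcomes]

theorem splitOutcomes_pair (b c : ℕ) :
    splitOutcomes {b, c} = ∑ r ∈ Finset.Ico 1 b, replicate b {r, b - r, c} +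
      ∑ r ∈ Finset.Ico 1 c, replicate c {r, c - r, b} := by
  simp [splitOutcomes, cons_singleton_erase]

theorem mergeOutcomes_singleton (m : ℕ) : mergeOutcomes {m} = 0 := by
  simp [mergeOutcomes]

theorem mergeOutcomes_pair (b c : ℕ) :
    mergeOutcomes {b, c} = replicate (b * c + c * b) {b + c} := by
  simp [mergeOutcomes, cons_singleton_erase, replicate_add, add_comm c b]

theorem crossMerges_singleton (m : ℕ) (L : Multiset ℕ) :
    crossMerges {m} L = L.bind fun d => replicate (m * d) ((m + d) ::ₘ L.erase d) := by
  simp [crossMerges]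

theorem crossMerges_pair (b c : ℕ) (L : Multiset ℕ) :
    crossMerges {b, c} L = L.bind fun d =>
      replicate (b * d) ((b + d) ::ₘ c ::ₘ L.erase d) +
        replicate (c * d) ((c + d) ::ₘ b ::ₘ L.erase d) := by
  simp [crossMerges, cons_singleton_erase, bind_add]

theorem stepOutcomes_pair_add (n b c : ℕ) (L : Multiset ℕ) :
    stepOutcomes n (b ::ₘ c ::ₘ L) = replicate n (b ::ₘ c ::ₘ L) +
      ∑ r ∈ Finset.Ico 1 b, replicate b (r ::ₘ (b - r) ::ₘ c ::ₘ L) +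
      ∑ r ∈ Finset.Ico 1 c, replicate c (r ::ₘ (c - r) ::ₘ b ::ₘ L) +
      replicate (b * c + c * b) ((b + c) ::ₘ L) +
      (splitOutcomes L + mergeOutcomes L).map (b ::ₘ c ::ₘ ·) + 2 • crossMerges {b, c} L := by
  rw [show b ::ₘ c ::ₘ L = {b, c} + L by simp, stepOutcomes_add, splitOutcomes_pair,
    mergeOutcomes_pair]
  simp [map_finsetSum]
  abel

theorem stepOutcomes_singleton_add (n m : ℕ) (L : Multiset ℕ) :
    stepOutcomes n (m ::ₘ L) = replicate n (m ::ₘ L) +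
      ∑ r ∈ Finset.Ico 1 m, replicate m (r ::ₘ (m - r) ::ₘ L) +
      (splitOutcomes L + mergeOutcomes L).map (m ::ₘ ·) + 2 • crossMerges {m} L := by
  rw [← singleton_add, stepOutcomes_add, splitOutcomes_singleton, mergeOutcomes_singleton]
  simp [map_finsetSum]

def MergesTo (X Y : Multiset ℕ) : Prop :=
  ∃ x y M, 0 < x ∧ 0 < y ∧ X = x ::ₘ y ::ₘ M ∧ Y = (x + y) ::ₘ M

theorem mergesTo_cons {x y s : ℕ} (hx : 0 < x) (hy : 0 < y) (h : x + y = s) (M : Multiset ℕ) :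
    MergesTo (x ::ₘ y ::ₘ M) (s ::ₘ M) :=
  ⟨x, y, M, hx, hy, rfl, h ▸ rfl⟩

theorem smGraph_adj_of_mergesTo {n : ℕ} {p q : Nat.Partition n} (h : MergesTo p.parts q.parts) :
    (smGraph n).Adj p q := by
  obtain ⟨x, y, M, hx, hy, hp, hq⟩ := h
  refine ⟨fun hpq => ?_, Or.inl ⟨x + y, by simp [hq], x, hx, by omega, ?_⟩⟩
  · have := congrArg card (hp.symm.trans (hpq ▸ hq))
    simp at this
  · simp [hp, hq]

theorem rho_le_one_of_mergesTo {n : ℕ} {p q : Nat.Partition n}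
    (h : MergesTo p.parts q.parts ∨ MergesTo q.parts p.parts) : rho n p q ≤ 1 := by
  have hadj : (smGraph n).Adj p q :=
    h.elim smGraph_adj_of_mergesTo fun h => (smGraph_adj_of_mergesTo h).symm
  exact (SimpleGraph.dist_eq_one_iff_adj.2 hadj).le

theorem sPart_comm (n : ℕ) (σ τ : Nat.Partition n) : sPart n σ τ = sPart n τ σ := by
  simp only [sPart, diffParts, eq_comm (a := σ), add_comm (σ.parts - τ.parts)]

theorem sPart_of_parts {n b c : ℕ} {L : Multiset ℕ} {σ τ : Nat.Partition n} (hb : 1 ≤ b)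
    (hbc : b ≤ c) (hσ : σ.parts = b ::ₘ c ::ₘ L) (hτ : τ.parts = (b + c) ::ₘ L) :
    sPart n σ τ = b := by
  have hne : σ ≠ τ :=
    (smGraph_adj_of_mergesTo (hσ ▸ hτ ▸ mergesTo_cons (by omega) (by omega) rfl L)).ne
  have hdiff : diffParts σ τ = {b, c, b + c} := by
    have hσ' : σ.parts = {b, c} + L := by simp [hσ]
    have hτ' : τ.parts = {b + c} + L := by simp [hτ]
    rw [diffParts, hσ', hτ', add_tsub_add_eq_tsub_right, add_tsub_add_eq_tsub_right]
    simp only [sub_singleton, insert_eq_cons, sub_cons]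
    rw [erase_of_notMem (s := b ::ₘ {c}) (by simp; omega),
      erase_of_notMem (s := {b + c}) (a := b) (by simp; omega),
      erase_of_notMem (s := {b + c}) (a := c) (by simp; omega), cons_add, singleton_add]
  have hsort : ({b, c, b + c} : Multiset ℕ).sort (· ≤ ·) = [b, c, b + c] :=
    List.Perm.eq_of_pairwise' (pairwise_sort _ _) (by simp; omega)
      (coe_eq_coe.1 (by rw [sort_eq]; rfl))
  rw [sPart, if_neg hne, hdiff, hsort]
  rfl

/-- The fourth summand pairs the merges of `b` with `c` with the splits of `b + c` that are left
unmatched by the splits of `b` and of `c`, except for `2b` of those that give back `b ::ₘ c ::ₘ L`,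
which are paired with stays instead. -/
def mergeCoupling (n b c : ℕ) (L : Multiset ℕ) : Multiset (Multiset ℕ × Multiset ℕ) :=
  replicate (n - 2 * b) (b ::ₘ c ::ₘ L, (b + c) ::ₘ L) +
  replicate (2 * b) (b ::ₘ c ::ₘ L, b ::ₘ c ::ₘ L) +
  replicate (2 * b) ((b + c) ::ₘ L, (b + c) ::ₘ L) +
  (replicate (c - b) (b ::ₘ c ::ₘ L) +
    ∑ r ∈ Finset.Ico b c, replicate b (r ::ₘ (b + c - r) ::ₘ L) +
    ∑ r ∈ Finset.Ico (c + 1) (b + c), replicate (b + c) (r ::ₘ (b + c - r) ::ₘ L)).map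
      ((b + c) ::ₘ L, ·) +
  ∑ r ∈ Finset.Ico 1 b, replicate b (r ::ₘ (b - r) ::ₘ c ::ₘ L, r ::ₘ (b + c - r) ::ₘ L) +
  ∑ r ∈ Finset.Ico 1 c, replicate c (r ::ₘ (c - r) ::ₘ b ::ₘ L, r ::ₘ (b + c - r) ::ₘ L) +
  (splitOutcomes L + mergeOutcomes L).map (fun X => (b ::ₘ c ::ₘ X, (b + c) ::ₘ X)) +
  2 • L.bind fun d =>
    replicate (b * d) ((b + d) ::ₘ c ::ₘ L.erase d, (b + c + d) ::ₘ L.erase d) +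
    replicate (c * d) ((c + d) ::ₘ b ::ₘ L.erase d, (b + c + d) ::ₘ L.erase d)

theorem mergeCoupling_map_fst {n b c : ℕ} (hb : 1 ≤ b) (hbc : b ≤ c) (hn : 2 * b ≤ n)
    (L : Multiset ℕ) :
    (mergeCoupling n b c L).map Prod.fst = stepOutcomes n (b ::ₘ c ::ₘ L) := by
  have hcard :
      2 * b + ((c - b) + (c - b) * b + (b + c - (c + 1)) * (b + c)) = b * c + c * b := by
    obtain ⟨k, rfl⟩ := Nat.exists_eq_add_of_le hbc
    obtain ⟨j, rfl⟩ := Nat.exists_eq_add_of_le hb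
    simp only [Nat.add_sub_cancel_left, show 1 + j + (1 + j + k) - (1 + j + k + 1) = j by omega]
    ring
  obtain ⟨m, rfl⟩ := Nat.exists_eq_add_of_le hn
  rw [stepOutcomes_pair_add, crossMerges_pair, mergeCoupling]
  simp [map_finsetSum, Multiset.map_bind, bind_add, ← hcard, Finset.sum_const, map_nsmul,
    nsmul_replicate, replicate_add, mul_add]
  abel

theorem sum_Ico_replicate_split {b c : ℕ} (hb : 1 ≤ b) (hbc : b ≤ c) (Y : ℕ → Multiset ℕ) :
    ∑ r ∈ Finset.Ico 1 (b + c), replicate (b + c) (Y r) =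
      ∑ r ∈ Finset.Ico 1 b, replicate b (Y r) + ∑ r ∈ Finset.Ico 1 c, replicate c (Y r) +
      replicate (2 * b) (Y c) +
      (replicate (c - b) (Y c) + ∑ r ∈ Finset.Ico b c, replicate b (Y r) +
        ∑ r ∈ Finset.Ico (c + 1) (b + c), replicate (b + c) (Y r)) := by
  rw [← Finset.sum_Ico_consecutive _ (by omega : 1 ≤ c) (by omega : c ≤ b + c),
    Finset.sum_eq_sum_Ico_succ_bot (by omega : c < b + c)]
  have hc : replicate (b + c) (Y c) = replicate (2 * b) (Y c) + replicate (c - b) (Y c) := by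
    rw [← replicate_add]
    congr 1
    omega
  rw [hc]
  simp only [replicate_add, Finset.sum_add_distrib]
  rw [← Finset.sum_Ico_consecutive _ hb hbc]
  abel

theorem mergeCoupling_map_snd {n b c : ℕ} (hb : 1 ≤ b) (hbc : b ≤ c) (hn : 2 * b ≤ n)
    (L : Multiset ℕ) :
    (mergeCoupling n b c L).map Prod.snd = stepOutcomes n ((b + c) ::ₘ L) := by
  obtain ⟨m, rfl⟩ := Nat.exists_eq_add_of_le hn
  rw [stepOutcomes_singleton_add, crossMerges_singleton,
    sum_Ico_replicate_split hb hbc (fun r => r ::ₘ (b + c - r) ::ₘ L), mergeCoupling]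
  simp [map_finsetSum, Multiset.map_bind, bind_add, map_nsmul, replicate_add, add_mul,
    cons_swap c b]
  abel

theorem eq_or_mergesTo_of_mem_mergeCoupling {n b c : ℕ} (hb : 1 ≤ b) (hbc : b ≤ c)
    {L : Multiset ℕ} {z : Multiset ℕ × Multiset ℕ} (hz : z ∈ mergeCoupling n b c L) :
    z.1 = z.2 ∨ MergesTo z.1 z.2 ∨ MergesTo z.2 z.1 := by
  simp only [mergeCoupling, mem_add, mem_replicate, mem_map, mem_sum, mem_nsmul, mem_bind,
    Finset.mem_Ico] at hz
  rcases hz with ((((((⟨-, rfl⟩ | ⟨-, rfl⟩) | ⟨-, rfl⟩) |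
      ⟨Y, ((⟨-, rfl⟩ | ⟨r, ⟨hbr, hr⟩, -, rfl⟩) | ⟨r, ⟨hcr, hr⟩, -, rfl⟩), rfl⟩) |
      ⟨r, ⟨hr, hrb⟩, -, rfl⟩) | ⟨r, ⟨hr, hrc⟩, -, rfl⟩) | ⟨X, -, rfl⟩) |
      ⟨-, d, -, (⟨-, rfl⟩ | ⟨-, rfl⟩)⟩
  · exact .inr (.inl (mergesTo_cons (by omega) (by omega) rfl L))
  · exact .inl rfl
  · exact .inl rfl
  · exact .inr (.inr (mergesTo_cons (by omega) (by omega) rfl L))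
  · exact .inr (.inr (mergesTo_cons (by omega) (by omega) (by omega) L))
  · exact .inr (.inr (mergesTo_cons (by omega) (by omega) (by omega) L))
  · refine .inr (.inl ⟨b - r, c, r ::ₘ L, by omega, by omega, ?_, ?_⟩)
    · rw [cons_swap r, cons_swap r]
    · rw [show b + c - r = b - r + c by omega]
      exact cons_swap _ _ _
  · refine .inr (.inl ⟨c - r, b, r ::ₘ L, by omega, by omega, ?_, ?_⟩)
    · rw [cons_swap r, cons_swap r]
    · rw [show b + c - r = c - r + b by omega]
      exact cons_swap _ _ _
  · exact .inr (.inl (mergesTo_cons (by omega) (by omega) rfl X))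
  · exact .inr (.inl (mergesTo_cons (by omega) (by omega) (by omega) _))
  · exact .inr (.inl (mergesTo_cons (by omega) (by omega) (by omega) _))

theorem two_mul_le_count_mergeCoupling (n b c : ℕ) (L : Multiset ℕ) :
    2 * b ≤ (mergeCoupling n b c L).count (b ::ₘ c ::ₘ L, b ::ₘ c ::ₘ L) ∧
      2 * b ≤ (mergeCoupling n b c L).count ((b + c) ::ₘ L, (b + c) ::ₘ L) := by
  simp only [mergeCoupling, count_add, count_replicate_self]
  omega

def IsMeetingCoupling (n : ℕ) (σ τ : Nat.Partition n)
    (μ : Nat.Partition n × Nat.Partition n → ℝ) : Prop :=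
  IsOneStepCoupling n σ τ μ ∧ (∀ p q, μ (p, q) ≠ 0 → rho n p q ≤ 1) ∧
    4 * sPart n σ τ / (n : ℝ) ^ 2 ≤ ∑ p, μ (p, p)

theorem IsMeetingCoupling.swap {n : ℕ} {σ τ : Nat.Partition n}
    {μ : Nat.Partition n × Nat.Partition n → ℝ} (h : IsMeetingCoupling n τ σ μ) :
    IsMeetingCoupling n σ τ (μ ∘ Prod.swap) := by
  obtain ⟨⟨hμ, hτ, hσ⟩, hρ, hmeet⟩ := h
  refine ⟨⟨fun z => hμ _, hσ, hτ⟩, fun p q hpq => ?_, ?_⟩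
  · rw [rho, SimpleGraph.dist_comm]
    exact hρ q p hpq
  · simpa [sPart_comm n σ τ] using hmeet

theorem isMeetingCoupling_mergeCoupling {n b c : ℕ} {L : Multiset ℕ} {σ τ : Nat.Partition n}
    (hb : 1 ≤ b) (hbc : b ≤ c) (hσ : σ.parts = b ::ₘ c ::ₘ L) (hτ : τ.parts = (b + c) ::ₘ L) :
    IsMeetingCoupling n σ τ (lawOf n (mergeCoupling n b c L)) := by
  have hn : 2 * b ≤ n := by
    have := σ.parts_sum
    simp only [hσ, sum_cons] at this
    omega
  refine ⟨isOneStepCoupling_lawOf (by omega) (hσ ▸ mergeCoupling_map_fst hb hbc hn L)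
    (hτ ▸ mergeCoupling_map_snd hb hbc hn L), fun p q hpq => ?_, ?_⟩
  · have hmem : (p.parts, q.parts) ∈ mergeCoupling n b c L :=
      count_ne_zero.1 fun h => hpq (by simp [lawOf, h])
    rcases eq_or_mergesTo_of_mem_mergeCoupling hb hbc hmem with h | h
    · simp [Nat.Partition.ext h, rho]
    · exact rho_le_one_of_mergesTo h
  · have hne : σ ≠ τ :=
      (smGraph_adj_of_mergesTo (hσ ▸ hτ ▸ mergesTo_cons (by omega) (by omega) rfl L)).ne
    obtain ⟨hσσ, hττ⟩ := two_mul_le_count_mergeCoupling n b c L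
    calc 4 * sPart n σ τ / (n : ℝ) ^ 2
        ≤ lawOf n (mergeCoupling n b c L) (σ, σ) + lawOf n (mergeCoupling n b c L) (τ, τ) := by
          rw [sPart_of_parts hb hbc hσ hτ, lawOf, lawOf, hσ, hτ, ← add_div]
          gcongr
          exact_mod_cast (by omega : 4 * b ≤ _ + _)
      _ = ∑ p ∈ {σ, τ}, lawOf n (mergeCoupling n b c L) (p, p) := by rw [Finset.sum_pair hne]
      _ ≤ ∑ p, lawOf n (mergeCoupling n b c L) (p, p) :=
          Finset.sum_le_sum_of_subset_of_nonneg (Finset.subset_univ _)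
            fun _ _ _ => by unfold lawOf; positivity

theorem exists_isMeetingCoupling_of_isSplitOf {n : ℕ} {σ τ : Nat.Partition n}
    (h : IsSplitOf n σ τ) : ∃ μ, IsMeetingCoupling n σ τ μ := by
  obtain ⟨a, ha, r, hr, hra, hσ⟩ := h
  have hτ : τ.parts = a ::ₘ τ.parts.erase a := (cons_erase ha).symm
  rcases le_total r (a - r) with hle | hle
  · exact ⟨_, isMeetingCoupling_mergeCoupling hr hle hσ (by rwa [Nat.add_sub_cancel' hra.le])⟩
  · exact ⟨_, isMeetingCoupling_mergeCoupling (by omega) hle (hσ.trans (cons_swap _ _ _))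
      (by rwa [Nat.sub_add_cancel hra.le])⟩

end SplitMerge

open SplitMerge in
theorem exists_one_step_coupling_general (n : ℕ) (σ τ : Nat.Partition n)
    (h : rho n σ τ = 1) :
    ∃ μ : Nat.Partition n × Nat.Partition n → ℝ,
      IsOneStepCoupling n σ τ μ ∧
      (∀ p q, μ (p, q) ≠ 0 → rho n p q ≤ 1) ∧
      4 * sPart n σ τ / (n : ℝ) ^ 2 ≤ ∑ p, μ (p, p) := by
  obtain ⟨-, hστ | hτσ⟩ := SimpleGraph.dist_eq_one_iff_adj.1 h
  · exact exists_isMeetingCoupling_of_isSplitOf hστ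
  · obtain ⟨μ, hμ⟩ := exists_isMeetingCoupling_of_isSplitOf hτσ
    exact ⟨_, hμ.swap⟩

/-- For adjacent partitions there is a one-step coupling of the split-merge chain that stays
within distance `1` and meets with probability at least `4 s(σ,τ)/n²`. -/
theorem exists_one_step_coupling (n : ℕ) (hn : 1 ≤ n) (σ τ : Nat.Partition n)
    (h : rho n σ τ = 1) :
    ∃ μ : Nat.Partition n × Nat.Partition n → ℝ,
      IsOneStepCoupling n σ τ μ ∧
      (∀ p q, μ (p, q) ≠ 0 → rho n p q ≤ 1) ∧
      4 * sPart n σ τ / (n : ℝ) ^ 2 ≤ ∑ p, μ (p, p) :=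
  exists_one_step_coupling_general n σ τ h

end
end

section
/- Let α, β > 0 and let (X_t, Y_t)_{t≥0} be a coalescent coupling of two split-merge chains on partitions of n with ρ(X₀, Y₀) = 1, such that: ρ(X_t, Y_t) ≤ 1 for all t; on the event {X_t ≠ Y_t}, ℙ(X_{t+1} = Y_{t+1} | (X_0,Y_0),…,(X_t,Y_t)) ≥ 4·s(X_t,Y_t)/n²; and 𝔼[s(X_t, Y_t)] ≥ β·n for all t ≥ α·n. Then ℙ(X_{⌈αn + n/2⌉} = Y_{⌈αn + n/2⌉}) ≥ β. -/
noncomputable section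
open scoped BigOperators Classical

/-!
Write `p t = ℙ(X_t = Y_t)`. By coalescence the meeting probability only grows, and on
`{X_t ≠ Y_t}` it grows by at least `4 s/n²`; since `s = n/2` on `{X_t = Y_t}`, this gives
`p (t+1) ≥ (1 - 2/n) p t + 4 𝔼[s(X_t,Y_t)]/n² ≥ (1 - 2/n) p t + 4β/n` for `t ≥ αn`.
Iterating from `p ≥ 0` at `t₀ = ⌈αn⌉` yields `p (t₀ + m) ≥ 2β (1 - (1 - 2/n)^m)`, and
Bernoulli's inequality gives `(1 - 2/n)^m ≤ 1/2` once `m ≥ n/2 - 1`.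
-/

open Finset

theorem sum_sum_snoc_eq_sum {Z M : Type*} [Fintype Z] [AddCommMonoid M] {t : ℕ}
    (f : (Fin (t + 1) → Z) → M) :
    ∑ h : Fin t → Z, ∑ z : Z, f (Fin.snoc h z) = ∑ g : Fin (t + 1) → Z, f g := by
  rw [Finset.sum_comm, ← Fintype.sum_prod_type']
  exact Fintype.sum_equiv (Fin.snocEquiv fun _ => Z) _ _ fun _ => rfl

theorem le_of_affine_recurrence {p : ℕ → ℝ} {r c : ℝ} (hr : 0 ≤ r) (h0 : 0 ≤ p 0)
    (hstep : ∀ j, r * p j + (1 - r) * c ≤ p (j + 1)) (j : ℕ) : c * (1 - r ^ j) ≤ p j := by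
  induction j with
  | zero => simpa using h0
  | succ j ih =>
    calc c * (1 - r ^ (j + 1)) = r * (c * (1 - r ^ j)) + (1 - r) * c := by ring
      _ ≤ r * p j + (1 - r) * c := by gcongr
      _ ≤ p (j + 1) := hstep j

theorem pow_le_half_of_le_mul_one_sub {x : ℝ} {m : ℕ} (hx : 0 ≤ x) (hm0 : m ≠ 0)
    (hm : x ≤ m * (1 - x)) : x ^ m ≤ 1 / 2 := by
  rcases hx.eq_or_lt with rfl | hx
  · simp [hm0]
  have hy : 0 < (1 - x) / x := div_pos (sub_pos.2 (by nlinarith)) hx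
  -- Bernoulli's inequality for `1 / x = 1 + (1 - x) / x`
  have hbern : 2 ≤ (1 + (1 - x) / x) ^ m := by
    have hmy : 1 ≤ m * ((1 - x) / x) := by rw [← mul_div_assoc, le_div_iff₀ hx]; linarith
    linarith [one_add_mul_le_pow (by linarith : -2 ≤ (1 - x) / x) m]
  have hinv : 1 + (1 - x) / x = x⁻¹ := by field_simp; ring
  rw [hinv, inv_pow, le_inv_comm₀ (by norm_num) (by positivity)] at hbern
  linarith

theorem one_sub_two_div_pow_le_half {n m : ℕ} (hn : 2 ≤ n) (hm0 : m ≠ 0) (hm : n ≤ 2 * m + 2) :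
    (1 - 2 / (n : ℝ)) ^ m ≤ 1 / 2 := by
  have hnR : (2 : ℝ) ≤ n := by exact_mod_cast hn
  have hmR : (n : ℝ) ≤ 2 * m + 2 := by exact_mod_cast hm
  refine pow_le_half_of_le_mul_one_sub ?_ hm0 ?_
  · rw [sub_nonneg, div_le_one (by linarith)]; exact hnR
  · rw [sub_sub_cancel, ← mul_div_assoc, sub_le_iff_le_add, ← add_div, le_div_iff₀ (by linarith)]
    linarith

theorem two_le_of_rho_eq_one {n : ℕ} {σ τ : Nat.Partition n} (h : rho n σ τ = 1) : 2 ≤ n := by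
  by_contra! hn
  have hne : σ ≠ τ := by rintro rfl; simp [rho] at h
  interval_cases n <;> exact hne (Subsingleton.elim σ τ)

theorem ceil_add_div_two_le_ceil_add_half {a : ℝ} (ha : 0 ≤ a) (n : ℕ) :
    ⌈a⌉₊ + n / 2 ≤ ⌈a + n / 2⌉₊ := by
  rw [← Nat.ceil_add_natCast ha]
  exact Nat.ceil_mono (by gcongr; exact Nat.cast_div_le)

section Coupling

variable {n : ℕ} {P : (t : ℕ) → (Fin (t + 1) → Nat.Partition n × Nat.Partition n) → ℝ}

theorem probAt_nonneg (hpos : ∀ t h, 0 ≤ P t h) (t : ℕ)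
    (E : Nat.Partition n × Nat.Partition n → Prop) : 0 ≤ probAt n P t E :=
  sum_nonneg fun h _ => by split_ifs <;> simp [hpos]

theorem probAt_succ_diag_eq (t : ℕ) :
    probAt n P (t + 1) (fun z => z.1 = z.2)
      = ∑ h : Fin (t + 1) → Nat.Partition n × Nat.Partition n,
          ∑ w : Nat.Partition n, P (t + 1) (Fin.snoc h (w, w)) := by
  rw [probAt, ← sum_sum_snoc_eq_sum]
  simp [Fintype.sum_prod_type]

theorem sum_snoc_diag_eq_of_coalescent
    (hmarg : ∀ t h, P t h = ∑ z : Nat.Partition n × Nat.Partition n, P (t + 1) (Fin.snoc h z))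
    (hco : IsCoalescent n P) {t : ℕ} {h : Fin (t + 1) → Nat.Partition n × Nat.Partition n}
    (hmet : (h (Fin.last t)).1 = (h (Fin.last t)).2) :
    ∑ w : Nat.Partition n, P (t + 1) (Fin.snoc h (w, w)) = P t h := by
  rw [hmarg, Fintype.sum_prod_type]
  refine sum_congr rfl fun a _ => ?_
  rw [Fintype.sum_eq_single a fun b hba => ?_]
  by_contra hP
  have := hco (t + 1) _ hP (Fin.last t).castSucc (Fin.last _) (Fin.le_last _)
    (by rwa [Fin.snoc_castSucc])
  simp [Fin.snoc_last, Ne.symm hba] at this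

theorem le_sum_snoc_diag (hn : n ≠ 0)
    (hmarg : ∀ t h, P t h = ∑ z : Nat.Partition n × Nat.Partition n, P (t + 1) (Fin.snoc h z))
    (hco : IsCoalescent n P) (hmb : MeetLowerBound n P) (t : ℕ)
    (h : Fin (t + 1) → Nat.Partition n × Nat.Partition n) :
    (1 - 2 / (n : ℝ)) * (if (h (Fin.last t)).1 = (h (Fin.last t)).2 then P t h else 0)
        + 4 / (n : ℝ) ^ 2 * (P t h * sPart n (h (Fin.last t)).1 (h (Fin.last t)).2)
      ≤ ∑ w : Nat.Partition n, P (t + 1) (Fin.snoc h (w, w)) := by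
  by_cases hmet : (h (Fin.last t)).1 = (h (Fin.last t)).2
  · rw [sum_snoc_diag_eq_of_coalescent hmarg hco hmet, if_pos hmet, sPart, if_pos hmet]
    exact le_of_eq (by field_simp; ring)
  · calc _ = 4 * sPart n (h (Fin.last t)).1 (h (Fin.last t)).2 / (n : ℝ) ^ 2 * P t h := by
          rw [if_neg hmet]; ring
      _ ≤ _ := hmb t h hmet

theorem probAt_succ_diag_ge (hn : n ≠ 0)
    (hmarg : ∀ t h, P t h = ∑ z : Nat.Partition n × Nat.Partition n, P (t + 1) (Fin.snoc h z))
    (hco : IsCoalescent n P) (hmb : MeetLowerBound n P) (t : ℕ) :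
    (1 - 2 / (n : ℝ)) * probAt n P t (fun z => z.1 = z.2)
        + 4 / (n : ℝ) ^ 2 * expAt n P t (fun z => sPart n z.1 z.2)
      ≤ probAt n P (t + 1) (fun z => z.1 = z.2) := by
  rw [probAt, expAt, mul_sum, mul_sum, ← sum_add_distrib, probAt_succ_diag_eq]
  exact sum_le_sum fun h _ => Eq.trans_le (by congr) (le_sum_snoc_diag hn hmarg hco hmb t h)

theorem two_mul_one_sub_pow_le_probAt (hn : 2 ≤ n) (hpos : ∀ t h, 0 ≤ P t h)
    (hmarg : ∀ t h, P t h = ∑ z : Nat.Partition n × Nat.Partition n, P (t + 1) (Fin.snoc h z))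
    (hco : IsCoalescent n P) (hmb : MeetLowerBound n P) {β : ℝ} {t₀ : ℕ}
    (hexp : ∀ t, t₀ ≤ t → β * n ≤ expAt n P t (fun z => sPart n z.1 z.2)) (j : ℕ) :
    2 * β * (1 - (1 - 2 / (n : ℝ)) ^ j) ≤ probAt n P (t₀ + j) (fun z => z.1 = z.2) := by
  have hnR : (2 : ℝ) ≤ n := by exact_mod_cast hn
  refine le_of_affine_recurrence (p := fun j => probAt n P (t₀ + j) _)
    (by rw [sub_nonneg, div_le_one (by positivity)]; exact hnR) (probAt_nonneg hpos _ _)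
    (fun j => ?_) j
  calc (1 - 2 / (n : ℝ)) * probAt n P (t₀ + j) _ + (1 - (1 - 2 / (n : ℝ))) * (2 * β)
      = (1 - 2 / (n : ℝ)) * probAt n P (t₀ + j) _ + 4 / (n : ℝ) ^ 2 * (β * n) := by
        field_simp; ring
    _ ≤ (1 - 2 / (n : ℝ)) * probAt n P (t₀ + j) _
          + 4 / (n : ℝ) ^ 2 * expAt n P (t₀ + j) (fun z => sPart n z.1 z.2) := by
        gcongr; exact hexp _ (Nat.le_add_right _ _)
    _ ≤ probAt n P (t₀ + j + 1) _ := probAt_succ_diag_ge (by omega) hmarg hco hmb (t₀ + j)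

end Coupling

theorem coupling_meets_by_time_general (n : ℕ) (α β : ℝ) (hα : 0 < α) (hβ : 0 < β)
    (σ τ : Nat.Partition n) (h : rho n σ τ = 1)
    (P : (t : ℕ) → (Fin (t + 1) → Nat.Partition n × Nat.Partition n) → ℝ)
    (hP : IsSMCoupling n σ τ P) (hco : IsCoalescent n P)
    (hmb : MeetLowerBound n P)
    (hexp : ∀ t : ℕ, α * n ≤ (t : ℝ) → β * n ≤ expAt n P t (fun z => sPart n z.1 z.2)) :
    β ≤ probAt n P ⌈α * n + n / 2⌉₊ (fun z => z.1 = z.2) := by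
  obtain ⟨hpos, -, hmarg, -, -⟩ := hP
  have hn2 : 2 ≤ n := two_le_of_rho_eq_one h
  have hT := ceil_add_div_two_le_ceil_add_half (a := α * n) (by positivity) n
  obtain ⟨m, hm⟩ := Nat.exists_eq_add_of_le (le_trans (Nat.le_add_right _ _) hT)
  have hmeet := two_mul_one_sub_pow_le_probAt hn2 hpos hmarg hco hmb
    (fun t ht => hexp t (Nat.ceil_le.1 ht)) m
  have hhalf := one_sub_two_div_pow_le_half (m := m) hn2 (by omega) (by omega)
  rw [hm]
  linarith [mul_le_mul_of_nonneg_left hhalf hβ.le]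

/-- If a coalescent coupling stays within distance `1`, meets at conditional rate at least
`4 s/n²`, and satisfies `𝔼[s(X_t,Y_t)] ≥ β n` for `t ≥ α n`, then the chains have met by
time `⌈α n + n/2⌉` with probability at least `β`. -/
theorem coupling_meets_by_time (n : ℕ) (hn : 1 ≤ n) (α β : ℝ) (hα : 0 < α) (hβ : 0 < β)
    (σ τ : Nat.Partition n) (h : rho n σ τ = 1)
    (P : (t : ℕ) → (Fin (t + 1) → Nat.Partition n × Nat.Partition n) → ℝ)
    (hP : IsSMCoupling n σ τ P) (hco : IsCoalescent n P) (hcl : StaysClose n P)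
    (hmb : MeetLowerBound n P)
    (hexp : ∀ t : ℕ, α * n ≤ (t : ℝ) → β * n ≤ expAt n P t (fun z => sPart n z.1 z.2)) :
    β ≤ probAt n P ⌈α * n + n / 2⌉₊ (fun z => z.1 = z.2) :=
  coupling_meets_by_time_general n α β hα hβ σ τ h P hP hco hmb hexp

end
end

section
/- For every n ≥ 1, the diameter of the set 𝒫_n of partitions of n under the split-merge adjacency is at most n: for any two partitions σ and τ of n, ρ(σ,τ) ≤ n. -/
noncomputable section
open scoped BigOperators Classical

/-!
Let `ℓ(p)` be the number of parts of `p`. Merging two parts is an edge that lowers `ℓ` by one,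
so `p` is within `ℓ(p) - 1` of the one-part partition `(n)`; splitting off a `1` is an edge that
raises `ℓ` by one, so `p` is within `n - ℓ(p)` of `(1ⁿ)`. Routing `σ → τ` through `(n)` or
through `(1ⁿ)` costs at most `ℓ(σ) + ℓ(τ) - 2` or `2n - ℓ(σ) - ℓ(τ)`; these add up to `2n - 2`,
so the shorter route has length at most `n`.
-/

open Multiset

theorem SimpleGraph.edist_le_of_exists_adj_lt {V : Type*} (G : SimpleGraph V) (f : V → ℕ) {t : V}
    (hzero : ∀ v, f v = 0 → v = t) (hstep : ∀ v, f v ≠ 0 → ∃ w, G.Adj v w ∧ f w < f v)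
    (v : V) : G.edist v t ≤ f v := by
  induction hv : f v using Nat.strong_induction_on generalizing v with
  | _ k ih =>
    rcases eq_or_ne k 0 with rfl | hk
    · simp [hzero v hv]
    obtain ⟨w, hvw, hlt⟩ := hstep v (hv ▸ hk)
    calc G.edist v t ≤ G.edist v w + G.edist w t := G.edist_triangle
      _ ≤ 1 + (f w : ℕ∞) :=
        add_le_add (G.edist_le_one_iff_adj_or_eq.2 (Or.inl hvw)) (ih _ (hv ▸ hlt) w rfl)
      _ ≤ k := by norm_cast; omega

theorem SimpleGraph.edist_le_edist_add_edist {V : Type*} (G : SimpleGraph V) (u v w : V) :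
    G.edist u v ≤ G.edist u w + G.edist v w := by
  rw [G.edist_comm (u := v)]
  exact G.edist_triangle

namespace Nat.Partition

variable {n : ℕ}

def ones (n : ℕ) : n.Partition where
  parts := replicate n 1
  parts_pos h := by rw [eq_of_mem_replicate h]; exact one_pos
  parts_sum := by simp

theorem card_parts_le (p : n.Partition) : card p.parts ≤ n := by
  simpa [p.parts_sum] using card_nsmul_le_sum (a := 1) fun _ h => p.parts_pos h

theorem card_parts_eq_iff (p : n.Partition) : card p.parts = n ↔ ∀ a ∈ p.parts, a = 1 := by
  refine ⟨fun h => ?_, fun h => ?_⟩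
  · by_contra! ⟨a, ha, ha1⟩
    have : (p.parts.map fun _ => 1).sum < (p.parts.map id).sum :=
      sum_lt_sum (fun b hb => p.parts_pos hb) ⟨a, ha, show 1 < a by have := p.parts_pos ha; omega⟩
    simp [p.parts_sum, h] at this
  · have hsum := p.parts_sum
    rw [eq_replicate_card.2 h] at hsum
    simpa using hsum

theorem eq_indiscrete_of_card_parts_le_one (p : n.Partition) (h : card p.parts ≤ 1) :
    p = indiscrete n := by
  rcases Nat.le_one_iff_eq_zero_or_eq_one.1 h with h | h
  · obtain rfl : n = 0 := by rw [← p.parts_sum, Multiset.card_eq_zero.1 h, sum_zero]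
    exact Subsingleton.elim _ _
  · obtain ⟨a, ha⟩ := card_eq_one.1 h
    obtain rfl : a = n := by rw [← p.parts_sum, ha, sum_singleton]
    ext1
    rw [ha, indiscrete_parts (p.parts_pos (ha ▸ mem_singleton_self a)).ne']

theorem eq_ones_of_le_card_parts (p : n.Partition) (h : n ≤ card p.parts) : p = ones n := by
  have hcard := le_antisymm p.card_parts_le h
  ext1
  exact eq_replicate.2 ⟨hcard, (p.card_parts_eq_iff).1 hcard⟩

theorem smGraph_adj_of_parts_eq {p q : n.Partition} {a b : ℕ} {s : Multiset ℕ}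
    (hp : p.parts = a ::ₘ b ::ₘ s) (hq : q.parts = (a + b) ::ₘ s) : (smGraph n).Adj p q := by
  have ha : 0 < a := p.parts_pos (by simp [hp])
  have hb : 0 < b := p.parts_pos (by simp [hp])
  refine ⟨fun hpq => by simpa [hpq ▸ hp] using congrArg card hq, Or.inl ?_⟩
  refine ⟨a + b, by simp [hq], a, ha, by omega, ?_⟩
  rw [hq, erase_cons_head, add_tsub_cancel_left, hp]

theorem exists_smGraph_adj_card_parts_lt (p : n.Partition) (h : 2 ≤ card p.parts) :
    ∃ q, (smGraph n).Adj p q ∧ card q.parts < card p.parts := by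
  obtain ⟨a, b, s, hp⟩ : ∃ a b s, p.parts = a ::ₘ b ::ₘ s := by
    obtain ⟨a, ha⟩ := card_pos_iff_exists_mem.1 (by omega : 0 < card p.parts)
    obtain ⟨t, ht⟩ := exists_cons_of_mem ha
    obtain ⟨b, hb⟩ := exists_mem_of_ne_zero (show t ≠ 0 by rintro rfl; simp [ht] at h)
    obtain ⟨s, hs⟩ := exists_cons_of_mem hb
    exact ⟨a, b, s, ht.trans (congrArg _ hs)⟩
  have hpos : ∀ i ∈ (a + b) ::ₘ s, 0 < i := by
    simp only [mem_cons, forall_eq_or_imp]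
    exact ⟨by have := p.parts_pos (by simp [hp] : a ∈ p.parts); omega,
      fun i hi => p.parts_pos (by simp [hp, hi])⟩
  refine ⟨⟨_, hpos _, by rw [← p.parts_sum, hp]; simp [add_assoc]⟩,
    smGraph_adj_of_parts_eq hp rfl, by simp [hp]⟩

theorem exists_smGraph_adj_lt_card_parts (p : n.Partition) (h : card p.parts < n) :
    ∃ q, (smGraph n).Adj p q ∧ card p.parts < card q.parts := by
  obtain ⟨a, ha, ha1⟩ : ∃ a ∈ p.parts, a ≠ 1 := by
    by_contra! hall
    exact h.ne ((p.card_parts_eq_iff).2 hall)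
  have ha2 : 2 ≤ a := by have := p.parts_pos ha; omega
  obtain ⟨s, hs⟩ := exists_cons_of_mem ha
  have hpos : ∀ i ∈ 1 ::ₘ (a - 1) ::ₘ s, 0 < i := by
    simp only [mem_cons, forall_eq_or_imp]
    exact ⟨one_pos, by omega, fun i hi => p.parts_pos (by simp [hs, hi])⟩
  refine ⟨⟨_, hpos _, by rw [← p.parts_sum, hs]; simp only [sum_cons]; omega⟩,
    (smGraph_adj_of_parts_eq rfl ?_).symm, by simp [hs]⟩
  rw [hs, Nat.add_sub_cancel' (by omega : 1 ≤ a)]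

theorem edist_indiscrete_le (p : n.Partition) :
    (smGraph n).edist p (indiscrete n) ≤ (card p.parts - 1 : ℕ) :=
  (smGraph n).edist_le_of_exists_adj_lt (fun p => card p.parts - 1)
    (fun p hp => p.eq_indiscrete_of_card_parts_le_one (by omega))
    (fun p hp => by
      obtain ⟨q, hpq, hlt⟩ := p.exists_smGraph_adj_card_parts_lt (by omega)
      exact ⟨q, hpq, by omega⟩) p

theorem edist_ones_le (p : n.Partition) :
    (smGraph n).edist p (ones n) ≤ (n - card p.parts : ℕ) :=
  (smGraph n).edist_le_of_exists_adj_lt (fun p => n - card p.parts)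
    (fun p hp => p.eq_ones_of_le_card_parts (by omega))
    (fun p hp => by
      obtain ⟨q, hpq, hlt⟩ := p.exists_smGraph_adj_lt_card_parts (by omega)
      exact ⟨q, hpq, by have := q.card_parts_le; omega⟩) p

end Nat.Partition

open Nat.Partition in
theorem sm_diameter_le_general (n : ℕ) (σ τ : Nat.Partition n) : rho n σ τ ≤ n := by
  have hσ := σ.card_parts_le
  have hτ := τ.card_parts_le
  have via_indiscrete := ((smGraph n).edist_le_edist_add_edist σ τ (indiscrete n)).trans
    (add_le_add σ.edist_indiscrete_le τ.edist_indiscrete_le)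
  have via_ones := ((smGraph n).edist_le_edist_add_edist σ τ (ones n)).trans
    (add_le_add σ.edist_ones_le τ.edist_ones_le)
  refine ENat.toNat_le_of_le_natCast ?_
  rcases le_total (card σ.parts + card τ.parts) (n + 1) with h | h
  · exact via_indiscrete.trans (by norm_cast; omega)
  · exact via_ones.trans (by norm_cast; omega)

/-- The diameter of the set of partitions of `n` under split-merge adjacency is at most `n`. -/
theorem sm_diameter_le (n : ℕ) (hn : 1 ≤ n) (σ τ : Nat.Partition n) : rho n σ τ ≤ n :=
  sm_diameter_le_general n σ τ

end
end
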